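/- arXiv:2511.03572 — 11 statements merged into one kernel-verified Lean document; each statement's English description precedes it below -/
import Mathlib

section
/- Let G be any real n×n matrix satisfying GW = 0 and GZ̃ = Z̃. Under homoskedasticity, E[xᵀGx] = ‖ℓ̃‖² + tr(G)·σ²_ν and E[yᵀGx] = β·(‖ℓ̃‖² + tr(G)·σ²_ν) + tr(G)·σ_{εν}. Consequently, if ‖ℓ̃‖² + tr(G)·σ²_ν ≠ 0, then the ratio-of-expectations bias satisfies E[yᵀGx]/E[xᵀGx] − β = tr(G)·σ_{εν} / (‖ℓ̃‖² + tr(G)·σ²_ν). -/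
/-!
Writing `x = m + ν` with the deterministic part `m = Z̃π + Wδ`, any square-integrable random
vectors satisfy `E[uᵀGv] = E[u]ᵀ G E[v] + ∑ᵢⱼ Gᵢⱼ Cov(uᵢ, vⱼ)`. Independence across
observations makes the covariance matrices of `(x, x)` and `(y, x)` scalar, namely `σ²_ν I` and
`(βσ²_ν + σ_{εν}) I`, which produces the trace terms. In the mean terms `GW = 0` and `GZ̃ = Z̃`
give `Gm = ℓ̃`, and `WᵀZ̃ = 0` removes the contributions of `Wδ` and of `E[ε] = Wα`.
-/

open MeasureTheory Matrix ProbabilityTheory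

theorem Matrix.mulVec_dotProduct_mulVec_eq_zero {ι κ κ' : Type*} [Fintype ι] [Fintype κ]
    [Fintype κ'] {W : Matrix ι κ ℝ} {Z : Matrix ι κ' ℝ} (hWZ : Wᵀ * Z = 0) (a : κ → ℝ)
    (b : κ' → ℝ) : (W *ᵥ a) ⬝ᵥ (Z *ᵥ b) = 0 := by
  rw [dotProduct_comm, dotProduct_mulVec, ← mulVec_transpose, mulVec_mulVec, hWZ, zero_mulVec,
    zero_dotProduct]

section

variable {Ω ι : Type*} [MeasurableSpace Ω] {μ : Measure Ω}

theorem covariance_eq_ite_of_iIndepFun [IsProbabilityMeasure μ] [DecidableEq ι] {X Y : Ω → ι → ℝ}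
    (hXY : iIndepFun (fun i ω => (X ω i, Y ω i)) μ)
    (hX : ∀ i, MemLp (fun ω => X ω i) 2 μ) (hY : ∀ i, MemLp (fun ω => Y ω i) 2 μ)
    (hYmean : ∀ i, ∫ ω, Y ω i ∂μ = 0) {c : ℝ} (hc : ∀ i, ∫ ω, X ω i * Y ω i ∂μ = c) (i j : ι) :
    cov[fun ω => X ω i, fun ω => Y ω j; μ] = if i = j then c else 0 := by
  split_ifs with hij
  · subst hij
    rw [covariance_eq_sub (hX i) (hY i), hYmean, mul_zero, sub_zero, ← hc]
    rfl
  · exact ((hXY.indepFun hij).comp measurable_fst measurable_snd).covariance_eq_zero (hX i) (hY j)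

theorem integral_const_add_apply [IsProbabilityMeasure μ] (m : ι → ℝ) {ν : Ω → ι → ℝ}
    (hν : ∀ i, Integrable (fun ω => ν ω i) μ) (hνmean : ∀ i, ∫ ω, ν ω i ∂μ = 0) :
    (fun i => ∫ ω, (m + ν ω) i ∂μ) = m := funext fun i => by
  simp only [Pi.add_apply]
  rw [integral_add (integrable_const _) (hν i), hνmean]
  simp

variable [Fintype ι]

theorem Matrix.sum_sum_mul_add_ite [DecidableEq ι] (G : Matrix ι ι ℝ) (a b : ι → ℝ) (c : ℝ) :
    ∑ i, ∑ j, G i j * (a i * b j + if i = j then c else 0) = a ⬝ᵥ (G *ᵥ b) + G.trace * c := by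
  simp only [mul_add, Finset.sum_add_distrib, mul_ite, mul_zero, Finset.sum_ite_eq,
    Finset.mem_univ, if_true, trace, diag, Finset.sum_mul, dotProduct, mulVec, Finset.mul_sum]
  congr 1
  refine Finset.sum_congr rfl fun i _ => Finset.sum_congr rfl fun j _ => by ring

theorem integral_dotProduct_mulVec {u v : Ω → ι → ℝ}
    (hu : ∀ i, MemLp (fun ω => u ω i) 2 μ) (hv : ∀ i, MemLp (fun ω => v ω i) 2 μ)
    (G : Matrix ι ι ℝ) :
    ∫ ω, u ω ⬝ᵥ (G *ᵥ v ω) ∂μ = ∑ i, ∑ j, G i j * ∫ ω, u ω i * v ω j ∂μ := by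
  have hint : ∀ i j, Integrable (fun ω => u ω i * (G i j * v ω j)) μ := fun i j =>
    ((hu i).integrable_mul (hv j)).const_mul (G i j) |>.congr
      (.of_forall fun ω => by simp only [Pi.mul_apply]; ring)
  simp_rw [dotProduct, mulVec, dotProduct, Finset.mul_sum]
  rw [integral_finsetSum _ fun i _ => integrable_finsetSum _ fun j _ => hint i j]
  refine Finset.sum_congr rfl fun i _ => ?_
  rw [integral_finsetSum _ fun j _ => hint i j]
  refine Finset.sum_congr rfl fun j _ => ?_
  rw [← integral_const_mul]
  congr 1 with ω
  ring

theorem integral_dotProduct_mulVec_of_covariance_eq_ite [IsProbabilityMeasure μ] [DecidableEq ι]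
    {u v : Ω → ι → ℝ} (hu : ∀ i, MemLp (fun ω => u ω i) 2 μ)
    (hv : ∀ i, MemLp (fun ω => v ω i) 2 μ) (G : Matrix ι ι ℝ) {c : ℝ}
    (hcov : ∀ i j, cov[fun ω => u ω i, fun ω => v ω j; μ] = if i = j then c else 0) :
    ∫ ω, u ω ⬝ᵥ (G *ᵥ v ω) ∂μ
      = (fun i => ∫ ω, u ω i ∂μ) ⬝ᵥ (G *ᵥ fun j => ∫ ω, v ω j ∂μ) + G.trace * c := by
  have hmoment : ∀ i j, ∫ ω, u ω i * v ω j ∂μ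
      = (∫ ω, u ω i ∂μ) * (∫ ω, v ω j ∂μ) + if i = j then c else 0 := fun i j => by
    rw [← hcov, covariance_eq_sub (hu i) (hv j)]
    simp only [Pi.mul_apply]
    ring
  simp_rw [integral_dotProduct_mulVec hu hv, hmoment, Matrix.sum_sum_mul_add_ite]

theorem integral_const_add_dotProduct_mulVec_const_add [IsProbabilityMeasure μ] [DecidableEq ι]
    (m : ι → ℝ) {ν : Ω → ι → ℝ} (hν : ∀ i, MemLp (fun ω => ν ω i) 2 μ)
    (hνmean : ∀ i, ∫ ω, ν ω i ∂μ = 0) (G : Matrix ι ι ℝ) {σsq : ℝ}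
    (hνν : ∀ i j, cov[fun ω => ν ω i, fun ω => ν ω j; μ] = if i = j then σsq else 0) :
    ∫ ω, (m + ν ω) ⬝ᵥ (G *ᵥ (m + ν ω)) ∂μ = m ⬝ᵥ (G *ᵥ m) + G.trace * σsq := by
  have hν1 : ∀ i, Integrable (fun ω => ν ω i) μ := fun i => (hν i).integrable one_le_two
  have hx : ∀ i, MemLp (fun ω => (m + ν ω) i) 2 μ := fun i => (memLp_const (m i)).add (hν i)
  rw [integral_dotProduct_mulVec_of_covariance_eq_ite hx hx G fun i j => ?_,
    integral_const_add_apply m hν1 hνmean]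
  simp only [Pi.add_apply]
  rw [covariance_const_add_left (hν1 i), covariance_const_add_right (hν1 j), hνν]

theorem integral_smul_const_add_add_dotProduct_mulVec_const_add [IsProbabilityMeasure μ]
    [DecidableEq ι] (β : ℝ) (m : ι → ℝ) {ε ν : Ω → ι → ℝ}
    (hε : ∀ i, MemLp (fun ω => ε ω i) 2 μ) (hν : ∀ i, MemLp (fun ω => ν ω i) 2 μ)
    (hνmean : ∀ i, ∫ ω, ν ω i ∂μ = 0) (G : Matrix ι ι ℝ) {σsq σεν : ℝ}
    (hνν : ∀ i j, cov[fun ω => ν ω i, fun ω => ν ω j; μ] = if i = j then σsq else 0)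
    (hεν : ∀ i j, cov[fun ω => ε ω i, fun ω => ν ω j; μ] = if i = j then σεν else 0) :
    ∫ ω, (β • (m + ν ω) + ε ω) ⬝ᵥ (G *ᵥ (m + ν ω)) ∂μ
      = (β • m + fun i => ∫ ω, ε ω i ∂μ) ⬝ᵥ (G *ᵥ m) + G.trace * (β * σsq + σεν) := by
  have hν1 : ∀ i, Integrable (fun ω => ν ω i) μ := fun i => (hν i).integrable one_le_two
  have hx : ∀ i, MemLp (fun ω => (m + ν ω) i) 2 μ := fun i => (memLp_const (m i)).add (hν i)
  have hy : ∀ i, MemLp (fun ω => (β • (m + ν ω) + ε ω) i) 2 μ :=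
    fun i => ((hx i).const_mul β).add (hε i)
  have hymean : (fun i => ∫ ω, (β • (m + ν ω) + ε ω) i ∂μ) = β • m + fun i => ∫ ω, ε ω i ∂μ :=
    funext fun i => by
      change ∫ ω, β * (m + ν ω) i + ε ω i ∂μ = _
      rw [integral_add (((hx i).integrable one_le_two).const_mul β)
        ((hε i).integrable one_le_two), integral_const_mul,
        congrFun (integral_const_add_apply m hν1 hνmean) i]
      rfl
  rw [integral_dotProduct_mulVec_of_covariance_eq_ite hy hx G fun i j => ?_, hymean,
    integral_const_add_apply m hν1 hνmean]
  change cov[(fun ω => β * (m i + ν ω i)) + (fun ω => ε ω i), fun ω => m j + ν ω j; μ] = _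
  rw [covariance_const_add_right (hν1 j),
    covariance_add_left (X := fun ω => β * (m i + ν ω i)) ((hx i).const_mul β) (hε i) (hν j),
    covariance_const_mul_left, covariance_const_add_left (hν1 i), hνν, hεν]
  split_ifs <;> ring

end

theorem stmt0_general
    {Ω : Type*} [MeasurableSpace Ω] (μ : Measure Ω) [IsProbabilityMeasure μ]
    (n K L : ℕ)
    (W : Matrix (Fin n) (Fin L) ℝ) (Z : Matrix (Fin n) (Fin K) ℝ)
    (hWZ : Wᵀ * Z = 0)
    (ε ν : Ω → Fin n → ℝ)
    (hindep : ProbabilityTheory.iIndepFun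
      (fun i ω => (ε ω i, ν ω i)) μ)
    (hεL2 : ∀ i, MemLp (fun ω => ε ω i) 2 μ)
    (hνL2 : ∀ i, MemLp (fun ω => ν ω i) 2 μ)
    (α : Fin L → ℝ) (π : Fin K → ℝ) (δ : Fin L → ℝ) (β : ℝ)
    (hνmean : ∀ i, ∫ ω, ν ω i ∂μ = 0)
    (hεmean : ∀ i, ∫ ω, ε ω i ∂μ = W i ⬝ᵥ α)
    (σνsq σεν : ℝ)
    -- homoskedasticity: `Var(ν_i) = σ²_ν` and `Cov(ε_i, ν_i) = σ_{εν}` for every `i`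
    -- (since `E[ν_i] = 0`, these are `E[ν_i²]` and `E[ε_i ν_i]`)
    (hhomν : ∀ i, ∫ ω, (ν ω i) ^ 2 ∂μ = σνsq)
    (hhomεν : ∀ i, ∫ ω, ε ω i * ν ω i ∂μ = σεν)
    (x y : Ω → Fin n → ℝ) (ℓ : Fin n → ℝ)
    (hx : ∀ ω, x ω = Z *ᵥ π + W *ᵥ δ + ν ω)
    (hℓ : ℓ = Z *ᵥ π)
    (hy : ∀ ω, y ω = β • x ω + ε ω)
    (G : Matrix (Fin n) (Fin n) ℝ)
    (hGW : G * W = 0) (hGZ : G * Z = Z) :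
    (∫ ω, x ω ⬝ᵥ (G *ᵥ x ω) ∂μ = ℓ ⬝ᵥ ℓ + G.trace * σνsq) ∧
    (∫ ω, y ω ⬝ᵥ (G *ᵥ x ω) ∂μ
      = β * (ℓ ⬝ᵥ ℓ + G.trace * σνsq) + G.trace * σεν) ∧
    (ℓ ⬝ᵥ ℓ + G.trace * σνsq ≠ 0 →
      (∫ ω, y ω ⬝ᵥ (G *ᵥ x ω) ∂μ) / (∫ ω, x ω ⬝ᵥ (G *ᵥ x ω) ∂μ) - β
        = G.trace * σεν / (ℓ ⬝ᵥ ℓ + G.trace * σνsq)) := by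
  subst hℓ
  set m := Z *ᵥ π + W *ᵥ δ with hm
  obtain rfl : x = fun ω => m + ν ω := funext hx
  obtain rfl : y = fun ω => β • (m + ν ω) + ε ω := funext hy
  have hνν : ∀ i j, cov[fun ω => ν ω i, fun ω => ν ω j; μ] = if i = j then σνsq else 0 :=
    covariance_eq_ite_of_iIndepFun (X := ν)
      (hindep.comp (fun _ p => (p.2, p.2)) fun _ => measurable_snd.prodMk measurable_snd)
      hνL2 hνL2 hνmean fun i => by simp only [← sq, hhomν]
  have hεν : ∀ i j, cov[fun ω => ε ω i, fun ω => ν ω j; μ] = if i = j then σεν else 0 :=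
    covariance_eq_ite_of_iIndepFun hindep hεL2 hνL2 hνmean hhomεν
  have hGm : G *ᵥ m = Z *ᵥ π := by
    rw [hm, mulVec_add, mulVec_mulVec, mulVec_mulVec, hGZ, hGW, zero_mulVec, add_zero]
  have hmℓ : m ⬝ᵥ (Z *ᵥ π) = (Z *ᵥ π) ⬝ᵥ (Z *ᵥ π) := by
    rw [hm, add_dotProduct, mulVec_dotProduct_mulVec_eq_zero hWZ, add_zero]
  have h1 := integral_const_add_dotProduct_mulVec_const_add m hνL2 hνmean G hνν
  have h2 := integral_smul_const_add_add_dotProduct_mulVec_const_add β m hεL2 hνL2 hνmean G hνν hεν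
  rw [hGm, hmℓ] at h1
  rw [show (fun i => ∫ ω, ε ω i ∂μ) = W *ᵥ α from funext hεmean, hGm, add_dotProduct,
    smul_dotProduct, hmℓ, mulVec_dotProduct_mulVec_eq_zero hWZ, add_zero, smul_eq_mul] at h2
  refine ⟨h1, by rw [h2]; ring, fun hden => ?_⟩
  rw [h1, h2]
  field_simp
  ring

/-- For any `G` with `G * W = 0` and `G * Z̃ = Z̃`, under homoskedasticity,
`E[xᵀGx] = ‖ℓ̃‖² + tr(G)·σ²_ν`, `E[yᵀGx] = β·(‖ℓ̃‖² + tr(G)·σ²_ν) + tr(G)·σ_{εν}`, and hence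
if `‖ℓ̃‖² + tr(G)·σ²_ν ≠ 0`, the ratio-of-expectations bias is
`tr(G)·σ_{εν} / (‖ℓ̃‖² + tr(G)·σ²_ν)`. -/
theorem stmt0
    {Ω : Type*} [MeasurableSpace Ω] (μ : Measure Ω) [IsProbabilityMeasure μ]
    (n K L : ℕ) (hn : 1 ≤ n) (hK : 1 ≤ K) (hL : 1 ≤ L)
    (W : Matrix (Fin n) (Fin L) ℝ) (Z : Matrix (Fin n) (Fin K) ℝ)
    (hWrank : W.rank = L) (hZrank : Z.rank = K) (hWZ : Wᵀ * Z = 0)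
    (ε ν : Ω → Fin n → ℝ)
    (hmeas : ∀ i, Measurable (fun ω => (ε ω i, ν ω i)))
    (hindep : ProbabilityTheory.iIndepFun
      (fun i ω => (ε ω i, ν ω i)) μ)
    (hεL2 : ∀ i, MemLp (fun ω => ε ω i) 2 μ)
    (hνL2 : ∀ i, MemLp (fun ω => ν ω i) 2 μ)
    (α : Fin L → ℝ) (π : Fin K → ℝ) (δ : Fin L → ℝ) (β : ℝ)
    (hνmean : ∀ i, ∫ ω, ν ω i ∂μ = 0)
    (hεmean : ∀ i, ∫ ω, ε ω i ∂μ = W i ⬝ᵥ α)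
    (σνsq σεν : ℝ)
    -- homoskedasticity: `Var(ν_i) = σ²_ν` and `Cov(ε_i, ν_i) = σ_{εν}` for every `i`
    -- (since `E[ν_i] = 0`, these are `E[ν_i²]` and `E[ε_i ν_i]`)
    (hhomν : ∀ i, ∫ ω, (ν ω i) ^ 2 ∂μ = σνsq)
    (hhomεν : ∀ i, ∫ ω, ε ω i * ν ω i ∂μ = σεν)
    (x y : Ω → Fin n → ℝ) (ℓ : Fin n → ℝ)
    (hx : ∀ ω, x ω = Z *ᵥ π + W *ᵥ δ + ν ω)
    (hℓ : ℓ = Z *ᵥ π)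
    (hy : ∀ ω, y ω = β • x ω + ε ω)
    (G : Matrix (Fin n) (Fin n) ℝ)
    (hGW : G * W = 0) (hGZ : G * Z = Z) :
    (∫ ω, x ω ⬝ᵥ (G *ᵥ x ω) ∂μ = ℓ ⬝ᵥ ℓ + G.trace * σνsq) ∧
    (∫ ω, y ω ⬝ᵥ (G *ᵥ x ω) ∂μ
      = β * (ℓ ⬝ᵥ ℓ + G.trace * σνsq) + G.trace * σεν) ∧
    (ℓ ⬝ᵥ ℓ + G.trace * σνsq ≠ 0 →
      (∫ ω, y ω ⬝ᵥ (G *ᵥ x ω) ∂μ) / (∫ ω, x ω ⬝ᵥ (G *ᵥ x ω) ∂μ) - β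
        = G.trace * σεν / (ℓ ⬝ᵥ ℓ + G.trace * σνsq)) :=
  stmt0_general μ n K L W Z hWZ ε ν hindep hεL2 hνL2 α π δ β hνmean hεmean σνsq σεν hhomν hhomεν x y
    ℓ hx hℓ hy G hGW hGZ
end

section
/- Suppose M_{ii} ≠ H_{ii} for every i, and let G_UJIVE = H − D(M − H), where D is the diagonal matrix with entries D_{ii} = H_{ii}/(M_{ii} − H_{ii}). Then G_UJIVE satisfies the three unbiasedness conditions: (G_UJIVE)_{ii} = 0 for every i, G_UJIVE·W = 0, and G_UJIVE·Z̃ = Z̃. -/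
open Matrix BigOperators

lemma aux_isUnit_of_rank_eq {K : ℕ} (A : Matrix (Fin K) (Fin K) ℝ) (h : A.rank = K) :
    IsUnit A := by
  rw [← Matrix.mulVec_surjective_iff_isUnit]
  have htop : LinearMap.range A.mulVecLin = ⊤ := by
    apply Submodule.eq_top_of_finrank_eq
    rw [show Module.finrank ℝ (LinearMap.range A.mulVecLin) = A.rank from rfl, h]
    simp
  exact LinearMap.range_eq_top.mp htop

/-- If `M_{ii} ≠ H_{ii}` for every `i`, then
`G_UJIVE = H − D(M − H)` with `D = diag(H_{ii}/(M_{ii} − H_{ii}))` has zero diagonal,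
`G_UJIVE · W = 0`, and `G_UJIVE · Z̃ = Z̃`. -/
theorem stmt2
    (n K L : ℕ) (hn : 1 ≤ n) (hK : 1 ≤ K) (hL : 1 ≤ L)
    (W : Matrix (Fin n) (Fin L) ℝ) (Z : Matrix (Fin n) (Fin K) ℝ)
    (hWrank : W.rank = L) (hZrank : Z.rank = K) (hWZ : Wᵀ * Z = 0)
    (M H : Matrix (Fin n) (Fin n) ℝ)
    (hM : M = 1 - W * (Wᵀ * W)⁻¹ * Wᵀ)
    (hH : H = Z * (Zᵀ * Z)⁻¹ * Zᵀ)
    (hMH : ∀ i, M i i ≠ H i i)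
    (D G : Matrix (Fin n) (Fin n) ℝ)
    (hD : D = Matrix.diagonal (fun i => H i i / (M i i - H i i)))
    (hG : G = H - D * (M - H)) :
    (∀ i, G i i = 0) ∧ G * W = 0 ∧ G * Z = Z := by
  have hWunit : IsUnit (Wᵀ * W) := by
    apply aux_isUnit_of_rank_eq
    rw [Matrix.rank_transpose_mul_self, hWrank]
  have hZunit : IsUnit (Zᵀ * Z) := by
    apply aux_isUnit_of_rank_eq
    rw [Matrix.rank_transpose_mul_self, hZrank]
  have hWinv : (Wᵀ * W)⁻¹ * (Wᵀ * W) = 1 :=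
    Matrix.nonsing_inv_mul _ ((Matrix.isUnit_iff_isUnit_det _).mp hWunit)
  have hZinv : (Zᵀ * Z)⁻¹ * (Zᵀ * Z) = 1 :=
    Matrix.nonsing_inv_mul _ ((Matrix.isUnit_iff_isUnit_det _).mp hZunit)
  have hZW : Zᵀ * W = 0 := by
    have := congrArg Matrix.transpose hWZ
    simpa using this
  have hMW : M * W = 0 := by
    rw [hM, Matrix.sub_mul, Matrix.one_mul, Matrix.mul_assoc, Matrix.mul_assoc,
      hWinv, Matrix.mul_one, sub_self]
  have hHW : H * W = 0 := by
    rw [hH, Matrix.mul_assoc, Matrix.mul_assoc, hZW, Matrix.mul_zero, Matrix.mul_zero]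
  have hHZ : H * Z = Z := by
    rw [hH, Matrix.mul_assoc, Matrix.mul_assoc, hZinv, Matrix.mul_one]
  have hMZ : M * Z = Z := by
    rw [hM, Matrix.sub_mul, Matrix.one_mul, Matrix.mul_assoc, Matrix.mul_assoc, hWZ,
      Matrix.mul_zero, Matrix.mul_zero, sub_zero]
  refine ⟨?_, ?_, ?_⟩
  · intro i
    rw [hG, Matrix.sub_apply, hD, Matrix.diagonal_mul, Matrix.sub_apply,
      div_mul_cancel₀ _ (sub_ne_zero.mpr (hMH i)), sub_self]
  · rw [hG, Matrix.sub_mul, Matrix.mul_assoc, Matrix.sub_mul, hMW, hHW, sub_zero,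
      Matrix.mul_zero, sub_zero]
  · rw [hG, Matrix.sub_mul, Matrix.mul_assoc, Matrix.sub_mul, hMZ, hHZ, sub_self,
      Matrix.mul_zero, sub_zero]
end

section
/- Let H_Q = H + W(WᵀW)⁻¹Wᵀ (the orthogonal projection onto the combined column space of Z̃ and W) and let D_Q be the diagonal matrix with the diagonal entries of H_Q. Suppose (H_Q)_{ii} ≠ 1 for every i, and let G_JIVE = M(I − D_Q)⁻¹(H_Q − D_Q). Then tr(G_JIVE) = −L. -/
open Matrix BigOperators

lemma isUnit_of_rank_eq_card {m k : ℕ} (A : Matrix (Fin m) (Fin k) ℝ) (h : A.rank = k) :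
    IsUnit (Aᵀ * A) := by
  rw [← Matrix.mulVec_surjective_iff_isUnit]
  have hr : (Aᵀ * A).rank = k := by rw [Matrix.rank_transpose_mul_self, h]
  have : LinearMap.range (Aᵀ * A).mulVecLin = ⊤ := by
    apply Submodule.eq_top_of_finrank_eq
    rw [← Matrix.rank, hr]
    simp
  intro v
  exact (LinearMap.range_eq_top.mp this) v

/-- With `H_Q = H + W(WᵀW)⁻¹Wᵀ`, `D_Q = diag(H_Q)`, and `(H_Q)_{ii} ≠ 1` for all
`i`, the JIVE matrix `G_JIVE = M(I − D_Q)⁻¹(H_Q − D_Q)` has trace `−L`. -/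
theorem stmt3
    (n K L : ℕ) (hn : 1 ≤ n) (hK : 1 ≤ K) (hL : 1 ≤ L)
    (W : Matrix (Fin n) (Fin L) ℝ) (Z : Matrix (Fin n) (Fin K) ℝ)
    (hWrank : W.rank = L) (hZrank : Z.rank = K) (hWZ : Wᵀ * Z = 0)
    (M H HQ DQ G : Matrix (Fin n) (Fin n) ℝ)
    (hM : M = 1 - W * (Wᵀ * W)⁻¹ * Wᵀ)
    (hH : H = Z * (Zᵀ * Z)⁻¹ * Zᵀ)
    (hHQ : HQ = H + W * (Wᵀ * W)⁻¹ * Wᵀ)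
    (hDQ : DQ = Matrix.diagonal (fun i => HQ i i))
    (hdiag : ∀ i, HQ i i ≠ 1)
    (hG : G = M * (1 - DQ)⁻¹ * (HQ - DQ)) :
    G.trace = -(L : ℝ) := by
  have hWd : IsUnit (Wᵀ * W).det :=
    (Matrix.isUnit_iff_isUnit_det _).mp (isUnit_of_rank_eq_card W hWrank)
  set P := W * (Wᵀ * W)⁻¹ * Wᵀ with hP
  have hZW : Zᵀ * W = 0 := by
    have := congrArg Matrix.transpose hWZ
    simpa using this
  have hinv : (Wᵀ * W)⁻¹ * (Wᵀ * W) = 1 := Matrix.nonsing_inv_mul _ hWd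
  have hHP : H * P = 0 := by
    have h0 : Zᵀ * (W * ((Wᵀ * W)⁻¹ * Wᵀ)) = 0 := by
      rw [← Matrix.mul_assoc, hZW, Matrix.zero_mul]
    rw [hH, hP]
    simp only [Matrix.mul_assoc, h0, Matrix.mul_zero]
  have hPP : P * P = P := by
    rw [hP]
    rw [show W * (Wᵀ * W)⁻¹ * Wᵀ * (W * (Wᵀ * W)⁻¹ * Wᵀ)
        = W * ((Wᵀ * W)⁻¹ * (Wᵀ * W) * ((Wᵀ * W)⁻¹ * Wᵀ)) by
      simp only [Matrix.mul_assoc], hinv, Matrix.one_mul, Matrix.mul_assoc]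
  have hHQM : HQ * M = H := by
    rw [hHQ, hM]
    have : (H + P) * (1 - P) = H + P - H * P - P * P := by noncomm_ring
    rw [this, hHP, hPP]
    abel
  -- diagonal inverse
  set e : Fin n → ℝ := fun i => (1 - HQ i i)⁻¹ with he
  have hne : ∀ i, (1 : ℝ) - HQ i i ≠ 0 := fun i => sub_ne_zero.mpr (Ne.symm (hdiag i))
  have hE : (1 - DQ)⁻¹ = Matrix.diagonal e := by
    apply Matrix.inv_eq_right_inv
    rw [hDQ, ← Matrix.diagonal_one, Matrix.diagonal_sub, Matrix.diagonal_mul_diagonal]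
    have h1 : ∀ i, ((fun i => (1:ℝ) - HQ i i) i) * e i = 1 := fun i => mul_inv_cancel₀ (hne i)
    simp only [h1, Matrix.diagonal_one]
  -- trace computation
  have hGtr : G.trace = ((HQ - DQ) * M * Matrix.diagonal e).trace := by
    rw [hG, hE, Matrix.trace_mul_cycle]
  have hexp : (HQ - DQ) * M = H - DQ * M := by
    rw [Matrix.sub_mul, hHQM]
  have hMd : ∀ i, M i i = 1 - P i i := by
    intro i; rw [hM]; simp [Matrix.sub_apply, Matrix.one_apply_eq]
  have hHd : ∀ i, H i i = HQ i i - P i i := by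
    intro i; rw [hHQ]; simp [Matrix.add_apply]
  have hsum : G.trace = ∑ i, -(P i i) := by
    rw [hGtr, hexp, Matrix.sub_mul]
    rw [Matrix.trace_sub]
    have t1 : (H * Matrix.diagonal e).trace = ∑ i, H i i * e i := by
      simp [Matrix.trace, Matrix.diag, Matrix.mul_diagonal]
    have t2 : (DQ * M * Matrix.diagonal e).trace = ∑ i, HQ i i * M i i * e i := by
      rw [hDQ]
      simp [Matrix.trace, Matrix.diag, Matrix.mul_diagonal, Matrix.diagonal_mul]
    rw [t1, t2, ← Finset.sum_sub_distrib]
    apply Finset.sum_congr rfl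
    intro i _
    rw [hHd i, hMd i, he]
    have := hne i
    field_simp
    ring
  rw [hsum]
  have hPtr : P.trace = (L : ℝ) := by
    rw [hP, Matrix.trace_mul_cycle, Matrix.mul_nonsing_inv _ hWd, Matrix.trace_one]
    simp
  have : ∑ i, -(P i i) = -P.trace := by simp [Matrix.trace, Matrix.diag]
  rw [this, hPtr]
end

section
/- Suppose H_{ii} ≠ 1 for every i, and let G_IJIVE = M(I − diag(H))⁻¹(H − diag(H))M, where diag(H) is the diagonal matrix with the diagonal entries of H. Then tr(G_IJIVE) = Σ_{i=1}^{n} H_{ii}(1 − M_{ii})/(1 − H_{ii}). In particular tr(G_IJIVE) ≥ 0 whenever H_{ii} < 1 and M_{ii} ≤ 1 for all i. -/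
open Matrix BigOperators

lemma fullrank_isUnit {n m : ℕ} (A : Matrix (Fin n) (Fin m) ℝ) (h : A.rank = m) :
    IsUnit (Aᵀ * A) := by
  have hker : LinearMap.ker (Aᵀ * A).mulVecLin = ⊥ := by
    rw [Matrix.ker_mulVecLin_transpose_mul_self]
    have h1 := LinearMap.finrank_range_add_finrank_ker A.mulVecLin
    rw [show Module.finrank ℝ (LinearMap.range A.mulVecLin) = A.rank from rfl, h] at h1
    simp only [Module.finrank_fin_fun] at h1
    have : Module.finrank ℝ (LinearMap.ker A.mulVecLin) = 0 := by omega
    exact Submodule.finrank_eq_zero.mp this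
  exact Matrix.mulVec_injective_iff_isUnit.mp fun x y hxy =>
    (LinearMap.ker_eq_bot.mp hker) (show (Aᵀ * A).mulVecLin x = (Aᵀ * A).mulVecLin y from hxy)

/-- If `H_{ii} ≠ 1` for all `i`, the IJIVE matrix
`G_IJIVE = M(I − diag(H))⁻¹(H − diag(H))M` has trace `∑ i, H_{ii}(1 − M_{ii})/(1 − H_{ii})`;
in particular the trace is nonnegative whenever `H_{ii} < 1` and `M_{ii} ≤ 1` for all `i`. -/
theorem stmt4
    (n K L : ℕ) (hn : 1 ≤ n) (hK : 1 ≤ K) (hL : 1 ≤ L)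
    (W : Matrix (Fin n) (Fin L) ℝ) (Z : Matrix (Fin n) (Fin K) ℝ)
    (hWrank : W.rank = L) (hZrank : Z.rank = K) (hWZ : Wᵀ * Z = 0)
    (M H G : Matrix (Fin n) (Fin n) ℝ)
    (hM : M = 1 - W * (Wᵀ * W)⁻¹ * Wᵀ)
    (hH : H = Z * (Zᵀ * Z)⁻¹ * Zᵀ)
    (hdiag : ∀ i, H i i ≠ 1)
    (hG : G = M * (1 - Matrix.diagonal (fun i => H i i))⁻¹
      * (H - Matrix.diagonal (fun i => H i i)) * M) :
    G.trace = ∑ i, H i i * (1 - M i i) / (1 - H i i) ∧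
    ((∀ i, H i i < 1) → (∀ i, M i i ≤ 1) → 0 ≤ G.trace) := by
  have hWu : IsUnit (Wᵀ * W).det := (Matrix.isUnit_iff_isUnit_det _).mp (fullrank_isUnit W hWrank)
  have hZu : IsUnit (Zᵀ * Z).det := (Matrix.isUnit_iff_isUnit_det _).mp (fullrank_isUnit Z hZrank)
  have hZW : Zᵀ * W = 0 := by
    have := congrArg Matrix.transpose hWZ
    simpa [Matrix.transpose_mul] using this
  -- M is idempotent
  have hMM : M * M = M := by
    subst hM
    have key : (W * (Wᵀ * W)⁻¹ * Wᵀ) * (W * (Wᵀ * W)⁻¹ * Wᵀ) = W * (Wᵀ * W)⁻¹ * Wᵀ := by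
      calc (W * (Wᵀ * W)⁻¹ * Wᵀ) * (W * (Wᵀ * W)⁻¹ * Wᵀ)
          = W * ((Wᵀ * W)⁻¹ * (Wᵀ * W) * (Wᵀ * W)⁻¹) * Wᵀ := by
            simp only [Matrix.mul_assoc]
        _ = W * (Wᵀ * W)⁻¹ * Wᵀ := by rw [Matrix.nonsing_inv_mul _ hWu, Matrix.one_mul]
    simp only [Matrix.sub_mul, Matrix.mul_sub, Matrix.one_mul, Matrix.mul_one, key]
    abel
  -- H * M = H
  have hHM : H * M = H := by
    subst hM hH
    have : Z * (Zᵀ * Z)⁻¹ * Zᵀ * (W * (Wᵀ * W)⁻¹ * Wᵀ) = 0 := by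
      calc Z * (Zᵀ * Z)⁻¹ * Zᵀ * (W * (Wᵀ * W)⁻¹ * Wᵀ)
          = Z * (Zᵀ * Z)⁻¹ * ((Zᵀ * W) * ((Wᵀ * W)⁻¹ * Wᵀ)) := by
            simp only [Matrix.mul_assoc]
        _ = 0 := by rw [hZW]; simp [Matrix.mul_assoc]
    simp [Matrix.mul_sub, this]
  -- H is symmetric and idempotent, hence Hᵢᵢ ≥ 0
  have hHsymm : Hᵀ = H := by
    subst hH
    simp only [Matrix.transpose_mul, Matrix.transpose_transpose, Matrix.transpose_nonsing_inv]
    simp [Matrix.transpose_mul, Matrix.mul_assoc]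
  have hHH : H * H = H := by
    subst hH
    calc Z * (Zᵀ * Z)⁻¹ * Zᵀ * (Z * (Zᵀ * Z)⁻¹ * Zᵀ)
        = Z * ((Zᵀ * Z)⁻¹ * (Zᵀ * Z) * (Zᵀ * Z)⁻¹) * Zᵀ := by simp only [Matrix.mul_assoc]
      _ = Z * (Zᵀ * Z)⁻¹ * Zᵀ := by rw [Matrix.nonsing_inv_mul _ hZu, Matrix.one_mul]
  have hHnn : ∀ i, 0 ≤ H i i := by
    intro i
    have : H i i = ∑ k, H i k * H i k := by
      conv_lhs => rw [← hHH]
      rw [Matrix.mul_apply]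
      refine Finset.sum_congr rfl fun k _ => ?_
      rw [show H k i = Hᵀ i k from rfl, hHsymm]
    rw [this]
    exact Finset.sum_nonneg fun k _ => mul_self_nonneg _
  -- rewrite 1 - diag(H) as a diagonal matrix and invert it
  have hDdiag : (1 : Matrix (Fin n) (Fin n) ℝ) - Matrix.diagonal (fun i => H i i)
      = Matrix.diagonal (fun i => 1 - H i i) := by
    rw [← Matrix.diagonal_one, Matrix.diagonal_sub]
  have hDinv : ((1 : Matrix (Fin n) (Fin n) ℝ) - Matrix.diagonal (fun i => H i i))⁻¹
      = Matrix.diagonal (fun i => (1 - H i i)⁻¹) := by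
    rw [hDdiag]
    refine Matrix.inv_eq_right_inv ?_
    rw [Matrix.diagonal_mul_diagonal]
    rw [show (fun i => (1 - H i i) * (1 - H i i)⁻¹) = fun _ => (1 : ℝ) from
      funext fun i => mul_inv_cancel₀ (sub_ne_zero.mpr (fun h => hdiag i h.symm))]
    exact Matrix.diagonal_one
  -- compute the trace
  have htr : G.trace = ∑ i, H i i * (1 - M i i) / (1 - H i i) := by
    rw [hG, hDinv, Matrix.trace_mul_comm, ← Matrix.mul_assoc, ← Matrix.mul_assoc, hMM,
      Matrix.mul_assoc, Matrix.trace_mul_comm, Matrix.mul_assoc]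
    rw [show (H - Matrix.diagonal (fun i => H i i)) * M
        = H - Matrix.diagonal (fun i => H i i) * M from by rw [Matrix.sub_mul, hHM]]
    simp only [Matrix.trace, Matrix.diag_apply, Matrix.mul_apply, Matrix.sub_apply]
    refine Finset.sum_congr rfl fun i _ => ?_
    have hne : (1 : ℝ) - H i i ≠ 0 := sub_ne_zero.mpr (fun h => hdiag i h.symm)
    rw [Finset.sum_eq_single i (fun b _ hb => by
        simp [Matrix.diagonal_apply_ne' _ hb]) (fun h => absurd (Finset.mem_univ i) h)]
    rw [Matrix.diagonal_apply_eq]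
    rw [Finset.sum_eq_single i (fun b _ hb => by
        simp [Matrix.diagonal_apply_ne' _ hb]) (fun h => absurd (Finset.mem_univ i) h)]
    rw [Matrix.diagonal_apply_eq]
    field_simp
  refine ⟨htr, fun hH1 hM1 => ?_⟩
  rw [htr]
  refine Finset.sum_nonneg fun i _ => div_nonneg ?_ ?_
  · exact mul_nonneg (hHnn i) (sub_nonneg.mpr (hM1 i))
  · exact sub_nonneg.mpr (le_of_lt (hH1 i))
end

section
/- Suppose M_{ii} ≠ H_{ii} for every i and let G_UJIVE = H − D(M − H) with D the diagonal matrix with entries D_{ii} = H_{ii}/(M_{ii} − H_{ii}). Then G_UJIVE minimizes tr(GᵀG) over all real n×n matrices G satisfying the unbiasedness constraints G_{ii} = 0 for every i, GW = 0, and GZ̃ = Z̃: for every such G, tr(G_UJIVEᵀ G_UJIVE) ≤ tr(GᵀG). -/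
open Matrix BigOperators

lemma isUnit_det_of_rank_eq_card {k : ℕ} (A : Matrix (Fin k) (Fin k) ℝ)
    (h : A.rank = k) : IsUnit A.det := by
  rw [← Matrix.isUnit_iff_isUnit_det, ← Matrix.mulVec_surjective_iff_isUnit]
  have : LinearMap.range A.mulVecLin = ⊤ := by
    apply Submodule.eq_top_of_finrank_eq
    rw [← Matrix.rank, h]
    simp [Module.finrank_fintype_fun_eq_card]
  intro y
  obtain ⟨x, hx⟩ := LinearMap.range_eq_top.mp this y
  exact ⟨x, hx⟩

/-- The UJIVE matrix `G_UJIVE = H − D(M − H)` (with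
`D_{ii} = H_{ii}/(M_{ii} − H_{ii})`) minimizes `tr(GᵀG)` over all `G` with zero diagonal,
`GW = 0`, and `GZ̃ = Z̃`. -/
theorem stmt9
    (n K L : ℕ) (hn : 1 ≤ n) (hK : 1 ≤ K) (hL : 1 ≤ L)
    (W : Matrix (Fin n) (Fin L) ℝ) (Z : Matrix (Fin n) (Fin K) ℝ)
    (hWrank : W.rank = L) (hZrank : Z.rank = K) (hWZ : Wᵀ * Z = 0)
    (M H : Matrix (Fin n) (Fin n) ℝ)
    (hM : M = 1 - W * (Wᵀ * W)⁻¹ * Wᵀ)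
    (hH : H = Z * (Zᵀ * Z)⁻¹ * Zᵀ)
    (hMH : ∀ i, M i i ≠ H i i)
    (GU : Matrix (Fin n) (Fin n) ℝ)
    (hGU : GU = H - Matrix.diagonal (fun i => H i i / (M i i - H i i)) * (M - H)) :
    ∀ G : Matrix (Fin n) (Fin n) ℝ, (∀ i, G i i = 0) → G * W = 0 → G * Z = Z →
      (GUᵀ * GU).trace ≤ (Gᵀ * G).trace := by
  intro G hdiag hGW hGZ
  set D : Matrix (Fin n) (Fin n) ℝ :=
    Matrix.diagonal (fun i => H i i / (M i i - H i i)) with hD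
  -- invertibility
  have hWW : IsUnit (Wᵀ * W).det := by
    apply isUnit_det_of_rank_eq_card
    rw [Matrix.rank_transpose_mul_self, hWrank]
  have hZZ : IsUnit (Zᵀ * Z).det := by
    apply isUnit_det_of_rank_eq_card
    rw [Matrix.rank_transpose_mul_self, hZrank]
  have hWWinv : (Wᵀ * W)⁻¹ * (Wᵀ * W) = 1 := Matrix.nonsing_inv_mul _ hWW
  have hZZinv : (Zᵀ * Z)⁻¹ * (Zᵀ * Z) = 1 := Matrix.nonsing_inv_mul _ hZZ
  have hZW : Zᵀ * W = 0 := by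
    have := congrArg Matrix.transpose hWZ
    simpa [Matrix.transpose_mul] using this
  -- projection identities
  have hMW : M * W = 0 := by
    rw [hM, Matrix.sub_mul, Matrix.one_mul]
    simp only [Matrix.mul_assoc]
    rw [hWWinv, Matrix.mul_one, sub_self]
  have hHW : H * W = 0 := by
    rw [hH, Matrix.mul_assoc, Matrix.mul_assoc, hZW]
    simp [← Matrix.mul_assoc]
  have hMZ : M * Z = Z := by
    rw [hM, Matrix.sub_mul, Matrix.one_mul]
    simp only [Matrix.mul_assoc]
    rw [hWZ]
    simp
  have hHZ : H * Z = Z := by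
    rw [hH]
    simp only [Matrix.mul_assoc]
    rw [hZZinv, Matrix.mul_one]
  -- symmetry of M and H
  have hMsymm : Mᵀ = M := by
    rw [hM]
    simp [Matrix.transpose_sub, Matrix.transpose_mul, Matrix.transpose_nonsing_inv,
      Matrix.mul_assoc]
  have hHsymm : Hᵀ = H := by
    rw [hH]
    simp [Matrix.transpose_mul, Matrix.transpose_nonsing_inv, Matrix.mul_assoc]
  -- GU properties
  have hGUW : GU * W = 0 := by
    rw [hGU, Matrix.sub_mul, hHW, Matrix.mul_assoc, Matrix.sub_mul, hMW, hHW, sub_self,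
      Matrix.mul_zero, sub_self]
  have hGUZ : GU * Z = Z := by
    rw [hGU, Matrix.sub_mul, hHZ, Matrix.mul_assoc, Matrix.sub_mul, hMZ, hHZ, sub_self,
      Matrix.mul_zero, sub_zero]
  have hGUdiag : ∀ i, GU i i = 0 := by
    intro i
    rw [hGU]
    simp only [Matrix.sub_apply, hD, Matrix.diagonal_mul, Matrix.sub_apply]
    rw [div_mul_cancel₀ _ (sub_ne_zero.mpr (hMH i))]
    ring
  -- the difference
  set Δ : Matrix (Fin n) (Fin n) ℝ := G - GU with hΔ
  have hΔW : Δ * W = 0 := by rw [hΔ, Matrix.sub_mul, hGW, hGUW, sub_self]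
  have hΔZ : Δ * Z = 0 := by rw [hΔ, Matrix.sub_mul, hGZ, hGUZ, sub_self]
  have hΔdiag : ∀ i, Δ i i = 0 := by
    intro i; rw [hΔ]; simp [hdiag i, hGUdiag i]
  have hΔH : Δ * H = 0 := by
    rw [hH, ← Matrix.mul_assoc, ← Matrix.mul_assoc, hΔZ, Matrix.zero_mul, Matrix.zero_mul]
  have hΔM : Δ * M = Δ := by
    rw [hM, Matrix.mul_sub, Matrix.mul_one, ← Matrix.mul_assoc, ← Matrix.mul_assoc, hΔW,
      Matrix.zero_mul, Matrix.zero_mul, sub_zero]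
  -- cross term vanishes
  have hcross : (GUᵀ * Δ).trace = 0 := by
    have hGUT : GUᵀ = H - (M - H) * D := by
      rw [hGU]
      simp [Matrix.transpose_sub, Matrix.transpose_mul, hMsymm, hHsymm, hD,
        Matrix.diagonal_transpose]
    rw [hGUT, Matrix.sub_mul, Matrix.trace_sub]
    have h1 : (H * Δ).trace = 0 := by
      rw [Matrix.trace_mul_comm, hΔH, Matrix.trace_zero]
    have h2 : ((M - H) * D * Δ).trace = 0 := by
      rw [Matrix.trace_mul_comm, ← Matrix.mul_assoc, Matrix.mul_sub, hΔM, hΔH, sub_zero]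
      rw [Matrix.trace]
      apply Finset.sum_eq_zero
      intro i _
      show (Δ * D) i i = 0
      rw [hD, Matrix.mul_diagonal, hΔdiag i, zero_mul]
    rw [h1, h2, sub_zero]
  -- expand tr(GᵀG)
  have hexp : (Gᵀ * G).trace
      = (GUᵀ * GU).trace + (Δᵀ * Δ).trace + 2 * (GUᵀ * Δ).trace := by
    have hG : G = GU + Δ := by rw [hΔ]; abel
    have hΔGU : (Δᵀ * GU).trace = (GUᵀ * Δ).trace := by
      rw [← Matrix.trace_transpose (Δᵀ * GU), Matrix.transpose_mul, Matrix.transpose_transpose]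
    rw [hG]
    rw [Matrix.transpose_add, Matrix.add_mul, Matrix.mul_add, Matrix.mul_add]
    rw [Matrix.trace_add, Matrix.trace_add, Matrix.trace_add, hΔGU]
    ring
  rw [hexp, hcross]
  have hnonneg : 0 ≤ (Δᵀ * Δ).trace := by
    rw [Matrix.trace]
    apply Finset.sum_nonneg
    intro i _
    simp only [Matrix.diag, Matrix.mul_apply, Matrix.transpose_apply]
    exact Finset.sum_nonneg fun j _ => mul_self_nonneg _
  linarith
end

section
/- Suppose the n×n matrix A with entries A_{ij} = (M − H)_{ij}² (the Hadamard square of M − H) is invertible, let λ = A⁻¹·diag-vector(H) ∈ ℝⁿ, and let G_FEJIV = H − (M − H)·diag(λ)·(M − H). Then G_FEJIV satisfies the five constraints (G_FEJIV)_{ii} = 0 for every i, G_FEJIV·W = 0, G_FEJIV·Z̃ = Z̃, Wᵀ·G_FEJIV = 0, and Z̃ᵀ·G_FEJIV = Z̃ᵀ; moreover it minimizes tr(GᵀG) over all real n×n matrices G satisfying these five constraints. -/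
open Matrix BigOperators

lemma aux_isUnit_of_rank {k : ℕ} (B : Matrix (Fin k) (Fin k) ℝ) (h : B.rank = k) :
    IsUnit B := by
  rw [← Matrix.mulVec_surjective_iff_isUnit]
  have hr : LinearMap.range B.mulVecLin = ⊤ := by
    apply Submodule.eq_top_of_finrank_eq
    rw [← Matrix.rank, h]
    simp [Module.finrank_pi]
  intro v
  obtain ⟨w, hw⟩ := LinearMap.range_eq_top.mp hr v
  exact ⟨w, hw⟩

theorem stmt10
    (n K L : ℕ) (hn : 1 ≤ n) (hK : 1 ≤ K) (hL : 1 ≤ L)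
    (W : Matrix (Fin n) (Fin L) ℝ) (Z : Matrix (Fin n) (Fin K) ℝ)
    (hWrank : W.rank = L) (hZrank : Z.rank = K) (hWZ : Wᵀ * Z = 0)
    (M H A : Matrix (Fin n) (Fin n) ℝ)
    (hM : M = 1 - W * (Wᵀ * W)⁻¹ * Wᵀ)
    (hH : H = Z * (Zᵀ * Z)⁻¹ * Zᵀ)
    (hA : A = Matrix.hadamard (M - H) (M - H))
    (hAinv : IsUnit A)
    (lam : Fin n → ℝ) (hlam : lam = A⁻¹ *ᵥ (fun i => H i i))
    (GF : Matrix (Fin n) (Fin n) ℝ)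
    (hGF : GF = H - (M - H) * Matrix.diagonal lam * (M - H)) :
    (∀ i, GF i i = 0) ∧ GF * W = 0 ∧ GF * Z = Z ∧ Wᵀ * GF = 0 ∧ Zᵀ * GF = Zᵀ ∧
    (∀ G : Matrix (Fin n) (Fin n) ℝ, (∀ i, G i i = 0) → G * W = 0 → G * Z = Z →
      Wᵀ * G = 0 → Zᵀ * G = Zᵀ → (GFᵀ * GF).trace ≤ (Gᵀ * G).trace) := by
  have hZW : Zᵀ * W = 0 := by
    have := congrArg Matrix.transpose hWZ
    simpa using this
  have hWWu : IsUnit (Wᵀ * W) := by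
    apply aux_isUnit_of_rank
    rw [Matrix.rank_transpose_mul_self]; exact hWrank
  have hZZu : IsUnit (Zᵀ * Z) := by
    apply aux_isUnit_of_rank
    rw [Matrix.rank_transpose_mul_self]; exact hZrank
  have hWWinv : (Wᵀ * W)⁻¹ * (Wᵀ * W) = 1 :=
    Matrix.nonsing_inv_mul _ ((Matrix.isUnit_iff_isUnit_det _).mp hWWu)
  have hZZinv : (Zᵀ * Z)⁻¹ * (Zᵀ * Z) = 1 :=
    Matrix.nonsing_inv_mul _ ((Matrix.isUnit_iff_isUnit_det _).mp hZZu)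
  set P : Matrix (Fin n) (Fin n) ℝ := M - H with hP
  -- basic multiplication facts
  have hMW : M * W = 0 := by
    rw [hM, Matrix.sub_mul, Matrix.one_mul, Matrix.mul_assoc (W * (Wᵀ * W)⁻¹),
      Matrix.mul_assoc W, hWWinv, Matrix.mul_one, sub_self]
  have hMZ : M * Z = Z := by
    rw [hM, Matrix.sub_mul, Matrix.one_mul, Matrix.mul_assoc, Matrix.mul_assoc, hWZ,
      Matrix.mul_zero, Matrix.mul_zero, sub_zero]
  have hHW : H * W = 0 := by
    rw [hH, Matrix.mul_assoc, Matrix.mul_assoc, hZW, Matrix.mul_zero, Matrix.mul_zero]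
  have hHZ : H * Z = Z := by
    rw [hH, Matrix.mul_assoc (Z * (Zᵀ * Z)⁻¹), Matrix.mul_assoc Z, hZZinv, Matrix.mul_one]
  have hMsym : Mᵀ = M := by
    rw [hM]
    simp [Matrix.transpose_sub, Matrix.transpose_mul, Matrix.transpose_nonsing_inv,
      Matrix.mul_assoc]
  have hHsym : Hᵀ = H := by
    rw [hH]
    simp [Matrix.transpose_mul, Matrix.transpose_nonsing_inv, Matrix.mul_assoc]
  have hPsym : Pᵀ = P := by rw [hP, Matrix.transpose_sub, hMsym, hHsym]
  have hPW : P * W = 0 := by rw [hP, Matrix.sub_mul, hMW, hHW, sub_zero]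
  have hPZ : P * Z = 0 := by rw [hP, Matrix.sub_mul, hMZ, hHZ, sub_self]
  have hWP : Wᵀ * P = 0 := by
    have := congrArg Matrix.transpose hPW
    simpa [hPsym] using this
  have hZP : Zᵀ * P = 0 := by
    have := congrArg Matrix.transpose hPZ
    simpa [hPsym] using this
  -- A *ᵥ lam = diag of H
  have hAlam : A *ᵥ lam = fun i => H i i := by
    rw [hlam, Matrix.mulVec_mulVec,
      Matrix.mul_nonsing_inv _ ((Matrix.isUnit_iff_isUnit_det _).mp hAinv), Matrix.one_mulVec]
  -- zero diagonal
  have hdiag : ∀ i, GF i i = 0 := by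
    intro i
    have hPDP : (P * Matrix.diagonal lam * P) i i = (A *ᵥ lam) i := by
      rw [hA, Matrix.mulVec]
      simp only [Matrix.mul_apply, Matrix.diagonal_apply, Matrix.hadamard_apply,
        dotProduct]
      apply Finset.sum_congr rfl
      intro k _
      have hs : (∑ j, P i j * if j = k then lam j else 0) = P i k * lam k := by
        rw [Finset.sum_eq_single k]
        · simp
        · intro b _ hb; simp [hb]
        · intro hk; exact absurd (Finset.mem_univ k) hk
      rw [hs]
      have hki : P k i = P i k := by
        simpa using congrFun (congrFun hPsym i) k
      rw [hki]; ring
    rw [hGF]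
    simp only [Matrix.sub_apply]
    rw [hPDP, hAlam]
    simp
  have hGFW : GF * W = 0 := by
    rw [hGF, Matrix.sub_mul, hHW, Matrix.mul_assoc, hPW, Matrix.mul_zero, sub_zero]
  have hGFZ : GF * Z = Z := by
    rw [hGF, Matrix.sub_mul, hHZ, Matrix.mul_assoc, hPZ, Matrix.mul_zero, sub_zero]
  have hGFsym : GFᵀ = GF := by
    rw [hGF]
    simp [Matrix.transpose_sub, Matrix.transpose_mul, hHsym, hPsym, Matrix.diagonal_transpose,
      Matrix.mul_assoc]
  have hWGF : Wᵀ * GF = 0 := by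
    have := congrArg Matrix.transpose hGFW
    simpa [hGFsym] using this
  have hZGF : Zᵀ * GF = Zᵀ := by
    have := congrArg Matrix.transpose hGFZ
    simpa [hGFsym] using this
  refine ⟨hdiag, hGFW, hGFZ, hWGF, hZGF, ?_⟩
  intro G hGd hGW hGZ hWG hZG
  set D : Matrix (Fin n) (Fin n) ℝ := G - GF with hD
  have hDd : ∀ i, D i i = 0 := by
    intro i; rw [hD]; simp [hGd i, hdiag i]
  have hDW : D * W = 0 := by rw [hD, Matrix.sub_mul, hGW, hGFW, sub_zero]
  have hDZ : D * Z = 0 := by rw [hD, Matrix.sub_mul, hGZ, hGFZ, sub_self]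
  have hWD : Wᵀ * D = 0 := by rw [hD, Matrix.mul_sub, hWG, hWGF, sub_zero]
  have hZD : Zᵀ * D = 0 := by rw [hD, Matrix.mul_sub, hZG, hZGF, sub_self]
  -- H * D = 0
  have hHD : H * D = 0 := by
    rw [hH, Matrix.mul_assoc, Matrix.mul_assoc, hZD, Matrix.mul_zero, Matrix.mul_zero]
  -- P * D = D and D * P = D
  have hQD : W * (Wᵀ * W)⁻¹ * Wᵀ * D = 0 := by
    rw [Matrix.mul_assoc, Matrix.mul_assoc, hWD, Matrix.mul_zero, Matrix.mul_zero]
  have hPD : P * D = D := by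
    rw [hP, hM, Matrix.sub_mul, Matrix.sub_mul, Matrix.one_mul, hQD, hHD, sub_zero, sub_zero]
  have hDQ : D * (W * (Wᵀ * W)⁻¹ * Wᵀ) = 0 := by
    rw [← Matrix.mul_assoc, ← Matrix.mul_assoc, hDW, Matrix.zero_mul, Matrix.zero_mul]
  have hDH : D * H = 0 := by
    rw [hH, ← Matrix.mul_assoc, ← Matrix.mul_assoc, hDZ, Matrix.zero_mul, Matrix.zero_mul]
  have hDP : D * P = D := by
    rw [hP, hM, Matrix.mul_sub, Matrix.mul_sub, Matrix.mul_one, hDQ, hDH, sub_zero, sub_zero]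
  -- trace (GFᵀ * D) = 0
  have hcross : (GFᵀ * D).trace = 0 := by
    rw [hGFsym, hGF, Matrix.sub_mul, Matrix.trace_sub, hHD, Matrix.trace_zero]
    have : P * Matrix.diagonal lam * P * D = P * Matrix.diagonal lam * D := by
      rw [Matrix.mul_assoc (P * Matrix.diagonal lam), hPD]
    have h0 : (D * Matrix.diagonal lam).trace = 0 := by
      rw [Matrix.trace]
      apply Finset.sum_eq_zero
      intro i _
      rw [Matrix.diag_apply, Matrix.mul_apply, Finset.sum_eq_single i]
      · simp [hDd i]
      · intro b _ hb; simp [Matrix.diagonal_apply, hb]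
      · intro hi; exact absurd (Finset.mem_univ i) hi
    rw [this, Matrix.trace_mul_cycle, hDP, h0, sub_zero]
  -- expand
  have hexp : (Gᵀ * G).trace = (GFᵀ * GF).trace + 2 * (GFᵀ * D).trace + (Dᵀ * D).trace := by
    have hG : G = GF + D := by rw [hD]; abel
    have hDGF : (Dᵀ * GF).trace = (GFᵀ * D).trace := by
      rw [Matrix.trace_mul_comm, ← Matrix.trace_transpose (GF * Dᵀ), Matrix.transpose_mul,
        Matrix.transpose_transpose, Matrix.trace_mul_comm]
    rw [hG]
    simp only [Matrix.transpose_add, Matrix.add_mul, Matrix.mul_add, Matrix.trace_add]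
    rw [hDGF]; ring
  have hDD : 0 ≤ (Dᵀ * D).trace := by
    rw [Matrix.trace]
    apply Finset.sum_nonneg
    intro i _
    simp only [Matrix.diag_apply, Matrix.mul_apply, Matrix.transpose_apply]
    exact Finset.sum_nonneg fun j _ => mul_self_nonneg _
  rw [hexp, hcross]
  linarith
end

section
/- Let G be any real n×n matrix with GW = 0 and GZ̃ = Z̃, and suppose ν is a random vector in ℝⁿ with independent mean-zero coordinates of common variance σ²_ν and x = Z̃π + Wδ + ν, ℓ̃ = Z̃π. Then the mean squared error of the leniency measure Gx satisfies E[‖Gx − ℓ̃‖²] = σ²_ν·tr(GᵀG). Consequently, if M_{ii} ≠ H_{ii} for all i and the Hadamard square of M − H is invertible, then with G_UJIVE = H − diag(H_{ii}/(M_{ii} − H_{ii}))·(M − H) and G_FEJIV = H − (M − H)·diag(((M−H)⊙(M−H))⁻¹ diag-vector(H))·(M − H), one has E[‖G_UJIVE·x − ℓ̃‖²] ≤ E[‖G_FEJIV·x − ℓ̃‖²]. -/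
/-!
For `G` with `G W = 0` and `G Z̃ = Z̃` the error `G x − ℓ̃` equals `G ν`, and since the coordinates
of `ν` are uncorrelated with common variance, `E‖G ν‖² = σ²_ν tr(GᵀG) = σ²_ν ∑ᵢ ‖Gᵢ‖²`. The
comparison is therefore row by row. Put `Q = M − H`, a symmetric idempotent with `H Q = 0`, and
let `hᵢ, qᵢ, sᵢ` be the `i`-th rows of `H`, `Q` and `S = Q diag(d) Q`, where `d` solves
`(Q ⊙ Q) d = diag H`. Then `G_FEJIV` has rows `hᵢ − sᵢ` with `hᵢ ⟂ sᵢ` and `sᵢ ⬝ qᵢ = Sᵢᵢ = Hᵢᵢ`,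
while `G_UJIVE` has rows `hᵢ − (Hᵢᵢ / Qᵢᵢ) qᵢ` with `Qᵢᵢ = ‖qᵢ‖²` and `hᵢ ⟂ qᵢ`. By Pythagoras
the squared row norms are `‖hᵢ‖² + Hᵢᵢ² / ‖qᵢ‖²` and `‖hᵢ‖² + ‖sᵢ‖²`, and Cauchy–Schwarz
applied to `Hᵢᵢ = sᵢ ⬝ qᵢ` compares them.
-/

open MeasureTheory Matrix

lemma transpose_mul_eq_zero_comm {R m k l : Type*} [Fintype m] [CommRing R] {A : Matrix m k R}
    {B : Matrix m l R} (h : Aᵀ * B = 0) : Bᵀ * A = 0 := by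
  rw [← transpose_transpose A, ← transpose_mul, h, transpose_zero]

lemma isUnit_of_rank_eq_card_s11 {K n : Type*} [Field K] [Fintype n] [DecidableEq n]
    {A : Matrix n n K} (h : A.rank = Fintype.card n) : IsUnit A := by
  rw [← mulVec_surjective_iff_isUnit]
  change Function.Surjective A.mulVecLin
  rw [← LinearMap.range_eq_top]
  exact Submodule.eq_top_of_finrank_eq (by rw [← rank, h, Module.finrank_fintype_fun_eq_card])

lemma isUnit_transpose_mul_self {m n : Type*} [Fintype m] [Fintype n] [DecidableEq n]
    {A : Matrix m n ℝ} (h : A.rank = Fintype.card n) : IsUnit (Aᵀ * A) :=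
  isUnit_of_rank_eq_card_s11 (by rw [rank_transpose_mul_self, h])

section Projections

variable {m k l : Type*} [Fintype m] [Fintype k] [DecidableEq k]

noncomputable def colProj (A : Matrix m k ℝ) : Matrix m m ℝ := A * (Aᵀ * A)⁻¹ * Aᵀ

lemma transpose_colProj (A : Matrix m k ℝ) : (colProj A)ᵀ = colProj A := by
  simp [colProj, transpose_mul, transpose_nonsing_inv, Matrix.mul_assoc]

lemma colProj_mul_self {A : Matrix m k ℝ} (hA : IsUnit (Aᵀ * A)) : colProj A * A = A := by
  rw [colProj, Matrix.mul_assoc, Matrix.mul_assoc,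
    nonsing_inv_mul _ ((isUnit_iff_isUnit_det _).mp hA), Matrix.mul_one]

lemma colProj_mul_eq_zero {A : Matrix m k ℝ} {B : Matrix m l ℝ} (h : Aᵀ * B = 0) :
    colProj A * B = 0 := by
  rw [colProj, Matrix.mul_assoc, h, Matrix.mul_zero]

lemma colProj_mul_colProj_eq_zero [Fintype l] [DecidableEq l] {A : Matrix m k ℝ}
    {B : Matrix m l ℝ} (h : Aᵀ * B = 0) : colProj A * colProj B = 0 := by
  rw [show colProj A * colProj B = colProj A * B * ((Bᵀ * B)⁻¹ * Bᵀ) by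
    simp only [colProj, Matrix.mul_assoc], colProj_mul_eq_zero h, Matrix.zero_mul]

lemma colProj_mul_colProj {A : Matrix m k ℝ} (hA : IsUnit (Aᵀ * A)) :
    colProj A * colProj A = colProj A := by
  rw [show colProj A * colProj A = colProj A * A * ((Aᵀ * A)⁻¹ * Aᵀ) by
    simp only [colProj, Matrix.mul_assoc], colProj_mul_self hA]
  simp only [colProj, Matrix.mul_assoc]

variable [DecidableEq m] [Fintype l] [DecidableEq l]

/-- With `M = 1 - colProj W` and `H = colProj Z`, this is `M - H`. -/
noncomputable def residualProj (W : Matrix m k ℝ) (Z : Matrix m l ℝ) : Matrix m m ℝ :=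
  1 - colProj W - colProj Z

lemma transpose_residualProj (W : Matrix m k ℝ) (Z : Matrix m l ℝ) :
    (residualProj W Z)ᵀ = residualProj W Z := by
  rw [residualProj, transpose_sub, transpose_sub, transpose_one, transpose_colProj,
    transpose_colProj]

variable {W : Matrix m k ℝ} {Z : Matrix m l ℝ}

lemma residualProj_mul_self (hW : IsUnit (Wᵀ * W)) (hZ : IsUnit (Zᵀ * Z)) (hWZ : Wᵀ * Z = 0) :
    residualProj W Z * residualProj W Z = residualProj W Z := by
  simp only [residualProj, sub_mul, mul_sub, one_mul, mul_one, colProj_mul_colProj hW,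
    colProj_mul_colProj hZ, colProj_mul_colProj_eq_zero hWZ,
    colProj_mul_colProj_eq_zero (transpose_mul_eq_zero_comm hWZ)]
  abel

lemma colProj_mul_residualProj (hZ : IsUnit (Zᵀ * Z)) (hWZ : Wᵀ * Z = 0) :
    colProj Z * residualProj W Z = 0 := by
  rw [residualProj, mul_sub, mul_sub, Matrix.mul_one,
    colProj_mul_colProj_eq_zero (transpose_mul_eq_zero_comm hWZ), colProj_mul_colProj hZ,
    sub_zero, sub_self]

lemma residualProj_mul_left_eq_zero (hW : IsUnit (Wᵀ * W)) (hWZ : Wᵀ * Z = 0) :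
    residualProj W Z * W = 0 := by
  rw [residualProj, Matrix.sub_mul, Matrix.sub_mul, Matrix.one_mul, colProj_mul_self hW,
    colProj_mul_eq_zero (transpose_mul_eq_zero_comm hWZ), sub_self, sub_zero]

lemma residualProj_mul_right_eq_zero (hZ : IsUnit (Zᵀ * Z)) (hWZ : Wᵀ * Z = 0) :
    residualProj W Z * Z = 0 := by
  rw [residualProj, Matrix.sub_mul, Matrix.sub_mul, Matrix.one_mul, colProj_mul_self hZ,
    colProj_mul_eq_zero hWZ, sub_zero, sub_self]

end Projections

section SecondMoment

variable {Ω : Type*} [MeasurableSpace Ω] {μ : Measure Ω} {n : Type*}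

lemma integral_mul_eq_ite_of_iIndepFun [DecidableEq n] {ν : Ω → n → ℝ}
    (hindep : ProbabilityTheory.iIndepFun (fun i ω => ν ω i) μ)
    (hL2 : ∀ i, MemLp (fun ω => ν ω i) 2 μ) (hmean : ∀ i, ∫ ω, ν ω i ∂μ = 0)
    {σsq : ℝ} (hvar : ∀ i, ∫ ω, ν ω i ^ 2 ∂μ = σsq) (j k : n) :
    ∫ ω, ν ω j * ν ω k ∂μ = if j = k then σsq else 0 := by
  split_ifs with hjk
  · subst hjk
    simpa [sq] using hvar j
  · have hprod := (hindep.indepFun hjk).integral_mul_eq_mul_integral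
      (hL2 j).aestronglyMeasurable (hL2 k).aestronglyMeasurable
    simpa [hmean j] using hprod

variable [Fintype n] [DecidableEq n] {ν : Ω → n → ℝ} {σsq : ℝ}

lemma integral_dotProduct_mulVec_eq_mul_trace (hL2 : ∀ i, MemLp (fun ω => ν ω i) 2 μ)
    (hcov : ∀ j k, ∫ ω, ν ω j * ν ω k ∂μ = if j = k then σsq else 0) (B : Matrix n n ℝ) :
    ∫ ω, ν ω ⬝ᵥ (B *ᵥ ν ω) ∂μ = σsq * B.trace := by
  have hint : ∀ j k, Integrable (fun ω => B j k * (ν ω j * ν ω k)) μ :=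
    fun j k => ((hL2 j).integrable_mul (hL2 k)).const_mul _
  have hexpand : ∀ ω, ν ω ⬝ᵥ (B *ᵥ ν ω) = ∑ j, ∑ k, B j k * (ν ω j * ν ω k) := fun ω => by
    simp only [dotProduct, mulVec, Finset.mul_sum]
    exact Finset.sum_congr rfl fun j _ => Finset.sum_congr rfl fun k _ => by ring
  simp_rw [hexpand]
  rw [integral_finsetSum _ fun j _ => integrable_finsetSum _ fun k _ => hint j k]
  simp_rw [integral_finsetSum _ fun k _ => hint _ k, integral_const_mul, hcov, mul_ite, mul_zero,
    Finset.sum_ite_eq, Finset.mem_univ, if_true, trace, diag, Finset.mul_sum, mul_comm]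

lemma integral_sum_sq_mulVec_eq_mul_trace {m : Type*} [Fintype m]
    (hL2 : ∀ i, MemLp (fun ω => ν ω i) 2 μ)
    (hcov : ∀ j k, ∫ ω, ν ω j * ν ω k ∂μ = if j = k then σsq else 0) (A : Matrix m n ℝ) :
    ∫ ω, ∑ i, (A *ᵥ ν ω) i ^ 2 ∂μ = σsq * (Aᵀ * A).trace := by
  have hquad : ∀ ω, ∑ i, (A *ᵥ ν ω) i ^ 2 = ν ω ⬝ᵥ ((Aᵀ * A) *ᵥ ν ω) := fun ω => by
    rw [← mulVec_mulVec, dotProduct_mulVec, vecMul_transpose]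
    simp only [dotProduct, sq]
  simp_rw [hquad]
  exact integral_dotProduct_mulVec_eq_mul_trace hL2 hcov _

end SecondMoment

section Leniency

variable {n : Type*} [Fintype n]

lemma trace_transpose_mul_self_eq_sum (G : Matrix n n ℝ) :
    (Gᵀ * G).trace = ∑ i, G i ⬝ᵥ G i := by
  rw [trace_mul_comm]
  rfl

lemma dotProduct_sub_smul_self_le {h q s : n → ℝ} (hhq : h ⬝ᵥ q = 0) (hhs : h ⬝ᵥ s = 0) :
    (h - (s ⬝ᵥ q / q ⬝ᵥ q) • q) ⬝ᵥ (h - (s ⬝ᵥ q / q ⬝ᵥ q) • q) ≤ (h - s) ⬝ᵥ (h - s) := by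
  have hcs : (s ⬝ᵥ q) ^ 2 ≤ (s ⬝ᵥ s) * (q ⬝ᵥ q) := by
    simpa only [dotProduct, sq] using Finset.sum_mul_sq_le_sq_mul_sq Finset.univ s q
  have hnonneg (v : n → ℝ) : 0 ≤ v ⬝ᵥ v := by simpa using dotProduct_star_self_nonneg v
  have hproj : (s ⬝ᵥ q / q ⬝ᵥ q) ^ 2 * (q ⬝ᵥ q) ≤ s ⬝ᵥ s := by
    rcases (hnonneg q).eq_or_lt with hq | hq
    · simpa [← hq] using hnonneg s
    · calc (s ⬝ᵥ q / q ⬝ᵥ q) ^ 2 * (q ⬝ᵥ q) = (s ⬝ᵥ q) ^ 2 / q ⬝ᵥ q := by field_simp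
        _ ≤ s ⬝ᵥ s := by rwa [div_le_iff₀ hq]
  simp only [sub_dotProduct, dotProduct_sub, smul_dotProduct, dotProduct_smul, smul_eq_mul,
    dotProduct_comm q h, dotProduct_comm s h, hhq, hhs]
  nlinarith

variable [DecidableEq n]

lemma mul_diagonal_mul_transpose_apply_self {m : Type*} (A : Matrix m n ℝ) (d : n → ℝ) (i : m) :
    (A * diagonal d * Aᵀ) i i = ((A ⊙ A) *ᵥ d) i := by
  rw [mul_apply]
  simp only [mul_diagonal, transpose_apply, mulVec, dotProduct, hadamard_apply]
  exact Finset.sum_congr rfl fun j _ => by ring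

/-- `G_UJIVE`, written with `Q` in place of `M - H`. -/
noncomputable def ujive (H Q : Matrix n n ℝ) : Matrix n n ℝ :=
  H - diagonal (fun i => H i i / Q i i) * Q

/-- `G_FEJIV`, written with `Q` in place of `M - H`. -/
noncomputable def fejiv (H Q : Matrix n n ℝ) : Matrix n n ℝ :=
  H - Q * diagonal ((Q ⊙ Q)⁻¹ *ᵥ fun i => H i i) * Q

lemma ujive_mul_of_mul_eq_zero {m : Type*} {H Q : Matrix n n ℝ} {X : Matrix n m ℝ}
    (hQX : Q * X = 0) : ujive H Q * X = H * X := by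
  rw [ujive, Matrix.sub_mul, Matrix.mul_assoc, hQX, Matrix.mul_zero, sub_zero]

lemma fejiv_mul_of_mul_eq_zero {m : Type*} {H Q : Matrix n n ℝ} {X : Matrix n m ℝ}
    (hQX : Q * X = 0) : fejiv H Q * X = H * X := by
  rw [fejiv, Matrix.sub_mul, Matrix.mul_assoc, hQX, Matrix.mul_zero, sub_zero]

lemma ujive_row_dotProduct_self_le_fejiv {H Q : Matrix n n ℝ} (hQ : Qᵀ = Q) (hQQ : Q * Q = Q)
    (hHQ : H * Q = 0) (hunit : IsUnit (Q ⊙ Q)) (i : n) :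
    ujive H Q i ⬝ᵥ ujive H Q i ≤ fejiv H Q i ⬝ᵥ fejiv H Q i := by
  set d := (Q ⊙ Q)⁻¹ *ᵥ fun i => H i i with hd
  set S := Q * diagonal d * Q with hSdef
  have hS : Sᵀ = S := by
    rw [hSdef, transpose_mul, transpose_mul, diagonal_transpose, hQ, Matrix.mul_assoc]
  have hSQ : S * Q = S := by rw [hSdef, Matrix.mul_assoc, hQQ]
  have hHS : H * S = 0 := by
    rw [hSdef, ← Matrix.mul_assoc, ← Matrix.mul_assoc, hHQ, Matrix.zero_mul, Matrix.zero_mul]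
  have hSii : S i i = H i i := by
    rw [hSdef, ← congrArg (Q * diagonal d * ·) hQ, mul_diagonal_mul_transpose_apply_self, hd,
      mulVec_mulVec, mul_nonsing_inv _ ((isUnit_iff_isUnit_det _).mp hunit), one_mulVec]
  -- `Aᵢ ⬝ᵥ Bⱼ` is definitionally `(A * Bᵀ) i j`.
  have hqq : Q i ⬝ᵥ Q i = Q i i := by
    change (Q * Qᵀ) i i = Q i i
    rw [hQ, hQQ]
  have hsq : S i ⬝ᵥ Q i = H i i := by
    change (S * Qᵀ) i i = H i i
    rw [hQ, hSQ, hSii]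
  have hhq : H i ⬝ᵥ Q i = 0 := by
    change (H * Qᵀ) i i = 0
    rw [hQ, hHQ, Matrix.zero_apply]
  have hhs : H i ⬝ᵥ S i = 0 := by
    change (H * Sᵀ) i i = 0
    rw [hS, hHS, Matrix.zero_apply]
  have hU : ujive H Q i = H i - (S i ⬝ᵥ Q i / Q i ⬝ᵥ Q i) • Q i := by
    ext j
    simp [ujive, hsq, hqq]
  rw [hU]
  exact dotProduct_sub_smul_self_le hhq hhs

end Leniency

theorem stmt11_general
    {Ω : Type*} [MeasurableSpace Ω] (μ : Measure Ω)
    (n K L : ℕ)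
    (W : Matrix (Fin n) (Fin L) ℝ) (Z : Matrix (Fin n) (Fin K) ℝ)
    (hWrank : W.rank = L) (hZrank : Z.rank = K) (hWZ : Wᵀ * Z = 0)
    (M H : Matrix (Fin n) (Fin n) ℝ)
    (hM : M = 1 - W * (Wᵀ * W)⁻¹ * Wᵀ)
    (hH : H = Z * (Zᵀ * Z)⁻¹ * Zᵀ)
    (ν : Ω → Fin n → ℝ)
    (hindep : ProbabilityTheory.iIndepFun
      (fun i ω => ν ω i) μ)
    (hνL2 : ∀ i, MemLp (fun ω => ν ω i) 2 μ)
    (hνmean : ∀ i, ∫ ω, ν ω i ∂μ = 0)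
    (σνsq : ℝ) (hhomν : ∀ i, ∫ ω, (ν ω i) ^ 2 ∂μ = σνsq)
    (π : Fin K → ℝ) (δ : Fin L → ℝ)
    (x : Ω → Fin n → ℝ) (ℓ : Fin n → ℝ)
    (hx : ∀ ω, x ω = Z *ᵥ π + W *ᵥ δ + ν ω)
    (hℓ : ℓ = Z *ᵥ π) :
    (∀ G : Matrix (Fin n) (Fin n) ℝ, G * W = 0 → G * Z = Z →
      ∫ ω, ∑ i, ((G *ᵥ x ω) i - ℓ i) ^ 2 ∂μ = σνsq * (Gᵀ * G).trace) ∧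
    ((∀ i, M i i ≠ H i i) → IsUnit (Matrix.hadamard (M - H) (M - H)) →
      ∀ GU GF : Matrix (Fin n) (Fin n) ℝ,
        GU = H - Matrix.diagonal (fun i => H i i / (M i i - H i i)) * (M - H) →
        GF = H - (M - H) * Matrix.diagonal
          ((Matrix.hadamard (M - H) (M - H))⁻¹ *ᵥ (fun i => H i i)) * (M - H) →
        ∫ ω, ∑ i, ((GU *ᵥ x ω) i - ℓ i) ^ 2 ∂μ
          ≤ ∫ ω, ∑ i, ((GF *ᵥ x ω) i - ℓ i) ^ 2 ∂μ) := by
  have hW : IsUnit (Wᵀ * W) := isUnit_transpose_mul_self (by rwa [Fintype.card_fin])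
  have hZ : IsUnit (Zᵀ * Z) := isUnit_transpose_mul_self (by rwa [Fintype.card_fin])
  have hmse : ∀ G : Matrix (Fin n) (Fin n) ℝ, G * W = 0 → G * Z = Z →
      ∫ ω, ∑ i, ((G *ᵥ x ω) i - ℓ i) ^ 2 ∂μ = σνsq * (Gᵀ * G).trace := by
    intro G hGW hGZ
    have hres : ∀ ω, G *ᵥ x ω - ℓ = G *ᵥ ν ω := fun ω => by
      rw [hx, hℓ, mulVec_add, mulVec_add, mulVec_mulVec, mulVec_mulVec, hGZ, hGW, zero_mulVec,
        add_zero, add_sub_cancel_left]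
    simp_rw [← Pi.sub_apply, hres]
    exact integral_sum_sq_mulVec_eq_mul_trace hνL2
      (integral_mul_eq_ite_of_iIndepFun hindep hνL2 hνmean hhomν) G
  refine ⟨hmse, fun _ hunit GU GF hGU hGF => ?_⟩
  have hQ : M - H = residualProj W Z := by rw [hM, hH]; rfl
  replace hGU : GU = ujive H (residualProj W Z) := by rw [hGU, ← hQ]; rfl
  replace hGF : GF = fejiv H (residualProj W Z) := by rw [hGF, ← hQ]; rfl
  have hHW : H * W = 0 := hH ▸ colProj_mul_eq_zero (transpose_mul_eq_zero_comm hWZ)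
  have hHZ : H * Z = Z := hH ▸ colProj_mul_self hZ
  have hQW := residualProj_mul_left_eq_zero hW hWZ
  have hQZ := residualProj_mul_right_eq_zero hZ hWZ
  rw [hmse GU (by rwa [hGU, ujive_mul_of_mul_eq_zero hQW])
      (by rwa [hGU, ujive_mul_of_mul_eq_zero hQZ]),
    hmse GF (by rwa [hGF, fejiv_mul_of_mul_eq_zero hQW])
      (by rwa [hGF, fejiv_mul_of_mul_eq_zero hQZ]),
    trace_transpose_mul_self_eq_sum, trace_transpose_mul_self_eq_sum, Finset.mul_sum,
    Finset.mul_sum]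
  refine Finset.sum_le_sum fun i _ => mul_le_mul_of_nonneg_left ?_ ?_
  · subst hGU hGF
    exact ujive_row_dotProduct_self_le_fejiv (transpose_residualProj W Z)
      (residualProj_mul_self hW hZ hWZ) (hH ▸ colProj_mul_residualProj hZ hWZ) (hQ ▸ hunit) i
  · rw [← hhomν i]
    exact integral_nonneg fun ω => sq_nonneg _

/-- For any `G` with `GW = 0` and `GZ̃ = Z̃`, if `ν` has independent mean-zero
coordinates of common variance `σ²_ν` and `x = Z̃π + Wδ + ν`, then
`E[‖Gx − ℓ̃‖²] = σ²_ν·tr(GᵀG)`. Consequently, if `M_{ii} ≠ H_{ii}` for all `i` and the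
Hadamard square of `M − H` is invertible, the UJIVE leniency measure has mean squared error
no larger than that of FEJIV. -/
theorem stmt11
    {Ω : Type*} [MeasurableSpace Ω] (μ : Measure Ω) [IsProbabilityMeasure μ]
    (n K L : ℕ) (hn : 1 ≤ n) (hK : 1 ≤ K) (hL : 1 ≤ L)
    (W : Matrix (Fin n) (Fin L) ℝ) (Z : Matrix (Fin n) (Fin K) ℝ)
    (hWrank : W.rank = L) (hZrank : Z.rank = K) (hWZ : Wᵀ * Z = 0)
    (M H : Matrix (Fin n) (Fin n) ℝ)
    (hM : M = 1 - W * (Wᵀ * W)⁻¹ * Wᵀ)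
    (hH : H = Z * (Zᵀ * Z)⁻¹ * Zᵀ)
    (ν : Ω → Fin n → ℝ)
    (hmeas : ∀ i, Measurable (fun ω => ν ω i))
    (hindep : ProbabilityTheory.iIndepFun
      (fun i ω => ν ω i) μ)
    (hνL2 : ∀ i, MemLp (fun ω => ν ω i) 2 μ)
    (hνmean : ∀ i, ∫ ω, ν ω i ∂μ = 0)
    (σνsq : ℝ) (hhomν : ∀ i, ∫ ω, (ν ω i) ^ 2 ∂μ = σνsq)
    (π : Fin K → ℝ) (δ : Fin L → ℝ)
    (x : Ω → Fin n → ℝ) (ℓ : Fin n → ℝ)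
    (hx : ∀ ω, x ω = Z *ᵥ π + W *ᵥ δ + ν ω)
    (hℓ : ℓ = Z *ᵥ π) :
    (∀ G : Matrix (Fin n) (Fin n) ℝ, G * W = 0 → G * Z = Z →
      ∫ ω, ∑ i, ((G *ᵥ x ω) i - ℓ i) ^ 2 ∂μ = σνsq * (Gᵀ * G).trace) ∧
    ((∀ i, M i i ≠ H i i) → IsUnit (Matrix.hadamard (M - H) (M - H)) →
      ∀ GU GF : Matrix (Fin n) (Fin n) ℝ,
        GU = H - Matrix.diagonal (fun i => H i i / (M i i - H i i)) * (M - H) →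
        GF = H - (M - H) * Matrix.diagonal
          ((Matrix.hadamard (M - H) (M - H))⁻¹ *ᵥ (fun i => H i i)) * (M - H) →
        ∫ ω, ∑ i, ((GU *ᵥ x ω) i - ℓ i) ^ 2 ∂μ
          ≤ ∫ ω, ∑ i, ((GF *ᵥ x ω) i - ℓ i) ^ 2 ∂μ) :=
  stmt11_general μ n K L W Z hWrank hZrank hWZ M H hM hH ν hindep hνL2 hνmean σνsq hhomν π δ x ℓ hx
    hℓ
end

section
/- Suppose ℓ(k, w) ≠ ℓ(j, w) for all j ≠ k and all w ∈ S, and define the pairwise IV estimand β(j, k, w) = (μ(k, w) − μ(j, w))/(ℓ(k, w) − ℓ(j, w)) and the weight ω(j, k, w) = p_j(w)·p_k(w)·(ℓ(k, w) − ℓ(j, w))². If E[ℓ̈·X] ≠ 0, then the leniency IV estimand β* = E[ℓ̈·Y]/E[ℓ̈·X] equals the weighted average of pairwise IV estimands: β* = (Σ_{1≤j<k≤K} E[ω(j, k, W)·β(j, k, W)]) / (Σ_{1≤j<k≤K} E[ω(j, k, W)]). -/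
open MeasureTheory ProbabilityTheory BigOperators

/-!
Split the expectation over the cells `{κ = k, W = w}`: for any integrable `Z` with cell means
`z k w`, `E[ℓ̈ Z] = ∑_w P(W = w) ∑_k p_k(w) (ℓ(k,w) - ℓ̄(w)) z(k,w)`, a within-cell covariance
of leniency and `z` under the weights `p(w)`. A Lagrange-type identity rewrites such a covariance as
`∑_{j<k} p_j p_k (ℓ_k - ℓ_j)(z_k - z_j)`. Taking `Z = Y` and `Z = X` gives the numerator and
denominator of `β*`, and the factor `(ℓ_k - ℓ_j)²` of `ω` cancels the denominator of `β`.
-/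

section PairwiseSums

variable {ι : Type*} [Fintype ι]

theorem two_mul_sum_sum_ite_lt_of_symm [LinearOrder ι] (F : ι → ι → ℝ)
    (hsymm : ∀ j k, F j k = F k j) (hdiag : ∀ j, F j j = 0) :
    2 * ∑ j, ∑ k, (if j < k then F j k else 0) = ∑ j, ∑ k, F j k := by
  have hsplit : ∀ j k, F j k = (if j < k then F j k else 0) + (if k < j then F k j else 0) := by
    intro j k
    rcases lt_trichotomy j k with h | rfl | h
    · simp [h, h.not_gt]
    · simp [hdiag]
    · simp [h, h.not_gt, hsymm j k]
  calc 2 * ∑ j, ∑ k, (if j < k then F j k else 0)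
      = ∑ j, ∑ k, (if j < k then F j k else 0) + ∑ j, ∑ k, (if k < j then F k j else 0) := by
        rw [two_mul, Finset.sum_comm (f := fun j k => if k < j then F k j else 0)]
    _ = ∑ j, ∑ k, F j k := by
        simp only [← Finset.sum_add_distrib, ← hsplit]

theorem sum_sum_mul_sub_mul_sub (p l z : ι → ℝ) :
    ∑ j, ∑ k, p j * p k * (l k - l j) * (z k - z j)
      = 2 * ((∑ k, p k) * ∑ k, p k * l k * z k - (∑ k, p k * l k) * ∑ k, p k * z k) := by
  have expand : ∀ j k, p j * p k * (l k - l j) * (z k - z j)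
      = p j * (p k * l k * z k) - p j * z j * (p k * l k)
        - p j * l j * (p k * z k) + p j * l j * z j * p k := fun j k => by ring
  simp only [expand, Finset.sum_add_distrib, Finset.sum_sub_distrib, ← Finset.mul_sum,
    ← Finset.sum_mul]
  ring

theorem sum_sum_ite_lt_mul_sub_mul_sub_eq [LinearOrder ι] {p : ι → ℝ} (hp : ∑ k, p k = 1)
    (l z : ι → ℝ) :
    ∑ j, ∑ k, (if j < k then p j * p k * (l k - l j) * (z k - z j) else 0)
      = ∑ k, p k * (l k - ∑ j, p j * l j) * z k := by
  have h2 := two_mul_sum_sum_ite_lt_of_symm (fun j k => p j * p k * (l k - l j) * (z k - z j))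
    (fun j k => by ring) (fun j => by ring)
  rw [sum_sum_mul_sub_mul_sub, hp] at h2
  have hmean : ∑ k, p k * (l k - ∑ j, p j * l j) * z k
      = ∑ k, p k * l k * z k - (∑ k, p k * l k) * ∑ k, p k * z k := by
    rw [Finset.mul_sum, ← Finset.sum_sub_distrib]
    exact Finset.sum_congr rfl fun k _ => by ring
  linarith

end PairwiseSums

section FiniteValued

variable {Ω α : Type*} [MeasurableSpace Ω] {μ : Measure Ω} [Fintype α] [MeasurableSpace α]
  [MeasurableSingletonClass α] {V : Ω → α}

theorem integral_comp_mul_eq_sum_setIntegral (hV : Measurable V) (f : α → ℝ) {Z : Ω → ℝ}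
    (hZ : Integrable Z μ) :
    ∫ ω, f (V ω) * Z ω ∂μ = ∑ a, f a * ∫ ω in V ⁻¹' {a}, Z ω ∂μ := by
  have hfib (a : α) : MeasurableSet (V ⁻¹' {a}) := hV (measurableSet_singleton a)
  have hfib_eq (a : α) :
      Set.EqOn (fun ω => f (V ω) * Z ω) (fun ω => f a * Z ω) (V ⁻¹' {a}) :=
    fun ω hω => by simp only [Set.mem_singleton_iff.mp (Set.mem_preimage.mp hω)]
  rw [← setIntegral_univ, ← Set.preimage_univ (f := V), ← Set.iUnion_of_singleton,
    Set.preimage_iUnion, integral_iUnion_fintype hfib (pairwise_disjoint_fiber V)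
      fun a => (hZ.const_mul (f a)).integrableOn.congr_fun (hfib_eq a).symm (hfib a)]
  refine Finset.sum_congr rfl fun a _ => ?_
  rw [setIntegral_congr_fun (hfib a) (hfib_eq a), integral_const_mul]

theorem integral_comp_eq_sum_measureReal [IsFiniteMeasure μ] (hV : Measurable V) (g : α → ℝ) :
    ∫ ω, g (V ω) ∂μ = ∑ a, μ.real (V ⁻¹' {a}) * g a := by
  simpa [mul_comm] using integral_comp_mul_eq_sum_setIntegral (μ := μ) hV g (integrable_const 1)

end FiniteValued

theorem setIntegral_eq_measureReal_mul_integral_cond {Ω : Type*} [MeasurableSpace Ω]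
    (μ : Measure Ω) [IsFiniteMeasure μ] (s : Set Ω) (Z : Ω → ℝ) :
    ∫ ω in s, Z ω ∂μ = μ.real s * ∫ ω, Z ω ∂μ[|s] := by
  rw [ProbabilityTheory.cond, integral_smul_measure, ENNReal.toReal_inv, smul_eq_mul,
    ← measureReal_def, ← mul_assoc]
  by_cases hs : μ.real s = 0
  · rw [hs, zero_mul, zero_mul, Measure.restrict_eq_zero.mpr ((measureReal_eq_zero_iff).mp hs),
      integral_zero_measure]
  · rw [mul_inv_cancel₀ hs, one_mul]

section Leniency

variable {Ω ι S : Type*} [MeasurableSpace Ω] {μ : Measure Ω} [IsFiniteMeasure μ]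
  {κ : Ω → ι} {W : Ω → S} {p : ι → S → ℝ}

theorem measureReal_cell_eq_mul
    (hp : ∀ k w, p k w = (μ {ω | κ ω = k ∧ W ω = w}).toReal / (μ {ω | W ω = w}).toReal)
    (k : ι) (w : S) :
    μ.real {ω | κ ω = k ∧ W ω = w} = p k w * μ.real {ω | W ω = w} := by
  by_cases hw : μ.real {ω | W ω = w} = 0
  · rw [hw, mul_zero]
    exact measureReal_mono_null (fun ω hω => hω.2) hw
  · rw [hp, ← measureReal_def, ← measureReal_def, div_mul_cancel₀ _ hw]

variable [Fintype ι] [MeasurableSpace S] [MeasurableSingletonClass S]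

theorem sum_eq_one_of_measureReal_ne_zero [MeasurableSpace ι] [MeasurableSingletonClass ι]
    (hκ : Measurable κ) (hW : Measurable W)
    (hp : ∀ k w, p k w = (μ {ω | κ ω = k ∧ W ω = w}).toReal / (μ {ω | W ω = w}).toReal)
    {w : S} (hw : μ.real {ω | W ω = w} ≠ 0) :
    ∑ k, p k w = 1 := by
  have hcells : ∑ k, μ.real {ω | κ ω = k ∧ W ω = w} = μ.real {ω | W ω = w} := by
    have hWw : MeasurableSet {ω | W ω = w} := hW (measurableSet_singleton w)
    have := sum_measureReal_preimage_singleton (μ := μ.restrict {ω | W ω = w}) Finset.univ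
      (f := κ) fun k _ => hκ (measurableSet_singleton k)
    simp only [measureReal_restrict_apply' hWw, Finset.coe_univ, Set.preimage_univ,
      Set.univ_inter] at this
    exact this
  simp only [hp, ← measureReal_def, ← Finset.sum_div, hcells, div_self hw]

variable [Fintype S] [LinearOrder ι]

theorem sum_sum_ite_lt_integral_comp (hW : Measurable W) (g : ι → ι → S → ℝ) :
    ∑ j, ∑ k, (if j < k then ∫ ω, g j k (W ω) ∂μ else 0)
      = ∑ w, μ.real {ω | W ω = w} * ∑ j, ∑ k, (if j < k then g j k w else 0) := by
  simp only [integral_comp_eq_sum_measureReal hW, Finset.mul_sum, mul_ite, mul_zero]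
  conv_rhs => rw [Finset.sum_comm]
  refine Finset.sum_congr rfl fun j _ => ?_
  conv_rhs => rw [Finset.sum_comm]
  exact Finset.sum_congr rfl fun k _ => by rw [Finset.sum_ite_irrel, Finset.sum_const_zero]; rfl

theorem integral_relLeniency_mul_eq_sum_pairwise [MeasurableSpace ι]
    [MeasurableSingletonClass ι] (hκ : Measurable κ) (hW : Measurable W)
    (hp : ∀ k w, p k w = (μ {ω | κ ω = k ∧ W ω = w}).toReal / (μ {ω | W ω = w}).toReal)
    (ℓ : ι → S → ℝ) {ℓdd : Ω → ℝ}
    (hℓdd : ∀ ω, ℓdd ω = ℓ (κ ω) (W ω) - ∑ j, p j (W ω) * ℓ j (W ω))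
    {Z : Ω → ℝ} (hZ : Integrable Z μ) {z : ι → S → ℝ}
    (hz : ∀ k w, z k w = ∫ ω, Z ω ∂(μ[|{ω | κ ω = k ∧ W ω = w}])) :
    ∫ ω, ℓdd ω * Z ω ∂μ = ∑ w, μ.real {ω | W ω = w} *
      ∑ j, ∑ k, (if j < k then p j w * p k w * (ℓ k w - ℓ j w) * (z k w - z j w) else 0) := by
  have hcells : ∫ ω, ℓdd ω * Z ω ∂μ = ∑ w, μ.real {ω | W ω = w} *
      ∑ k, p k w * (ℓ k w - ∑ j, p j w * ℓ j w) * z k w := by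
    simp only [hℓdd]
    rw [integral_comp_mul_eq_sum_setIntegral (V := fun ω => (κ ω, W ω)) (hκ.prodMk hW)
      (fun kw => ℓ kw.1 kw.2 - ∑ j, p j kw.2 * ℓ j kw.2) hZ, Fintype.sum_prod_type,
      Finset.sum_comm]
    refine Finset.sum_congr rfl fun w _ => ?_
    rw [Finset.mul_sum]
    refine Finset.sum_congr rfl fun k _ => ?_
    have hcell : (fun ω => (κ ω, W ω)) ⁻¹' {(k, w)} = {ω | κ ω = k ∧ W ω = w} := by
      ext ω; simp
    rw [hcell, setIntegral_eq_measureReal_mul_integral_cond, ← hz, measureReal_cell_eq_mul hp]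
    ring
  rw [hcells]
  refine Finset.sum_congr rfl fun w _ => ?_
  by_cases hw : μ.real {ω | W ω = w} = 0
  · simp [hw]
  · rw [sum_sum_ite_lt_mul_sub_mul_sub_eq (sum_eq_one_of_measureReal_ne_zero hκ hW hp hw)]

end Leniency

theorem stmt12_general
    {Ω : Type*} [MeasurableSpace Ω] (μ : Measure Ω) [IsProbabilityMeasure μ]
    (K : ℕ)
    (S : Type*) [Fintype S] [MeasurableSpace S] [MeasurableSingletonClass S]
    (κ : Ω → Fin K) (Wc : Ω → S) (hκ : Measurable κ) (hWc : Measurable Wc)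
    (X Y : Ω → ℝ) (hX : Integrable X μ) (hY : Integrable Y μ)
    (p : Fin K → S → ℝ)
    (hp : ∀ k w, p k w = (μ {ω | κ ω = k ∧ Wc ω = w}).toReal / (μ {ω | Wc ω = w}).toReal)
    (ℓ m : Fin K → S → ℝ)
    (hℓ : ∀ k w, ℓ k w = ∫ ω, X ω ∂(μ[|{ω | κ ω = k ∧ Wc ω = w}]))
    (hm : ∀ k w, m k w = ∫ ω, Y ω ∂(μ[|{ω | κ ω = k ∧ Wc ω = w}]))
    (ℓdd : Ω → ℝ)
    (hℓdd : ∀ ω, ℓdd ω = ℓ (κ ω) (Wc ω) - ∑ j, p j (Wc ω) * ℓ j (Wc ω))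
    (βp ωp : Fin K → Fin K → S → ℝ)
    (hβp : ∀ j k w, βp j k w = (m k w - m j w) / (ℓ k w - ℓ j w))
    (hωp : ∀ j k w, ωp j k w = p j w * p k w * (ℓ k w - ℓ j w) ^ 2) :
    (∫ ω, ℓdd ω * Y ω ∂μ) / (∫ ω, ℓdd ω * X ω ∂μ)
      = (∑ j : Fin K, ∑ k : Fin K, if j < k then
            ∫ ω, ωp j k (Wc ω) * βp j k (Wc ω) ∂μ else 0)
        / (∑ j : Fin K, ∑ k : Fin K, if j < k then ∫ ω, ωp j k (Wc ω) ∂μ else 0) := by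
  have hωβ (j k w) : ωp j k w * βp j k w = p j w * p k w * (ℓ k w - ℓ j w) * (m k w - m j w) := by
    rw [hωp, hβp]
    -- with `x / 0 = 0` both sides vanish when `ℓ k w = ℓ j w`
    rcases eq_or_ne (ℓ k w - ℓ j w) 0 with h | h
    · simp [h]
    · field_simp
  have hω (j k w) : ωp j k w = p j w * p k w * (ℓ k w - ℓ j w) * (ℓ k w - ℓ j w) := by
    rw [hωp]; ring
  rw [sum_sum_ite_lt_integral_comp hWc (fun j k w => ωp j k w * βp j k w),
    sum_sum_ite_lt_integral_comp hWc ωp,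
    integral_relLeniency_mul_eq_sum_pairwise hκ hWc hp ℓ hℓdd hY hm,
    integral_relLeniency_mul_eq_sum_pairwise hκ hWc hp ℓ hℓdd hX hℓ]
  simp only [hωβ]
  simp only [hω]

/-- If all examiner leniencies differ within each covariate cell and the
denominator `E[ℓ̈·X]` is nonzero, the leniency IV estimand `β* = E[ℓ̈·Y]/E[ℓ̈·X]` equals the
`ω(j,k,w)`-weighted average of the pairwise IV estimands `β(j,k,w)`. -/
theorem stmt12
    {Ω : Type*} [MeasurableSpace Ω] (μ : Measure Ω) [IsProbabilityMeasure μ]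
    (K : ℕ) (hK : 2 ≤ K)
    (S : Type*) [Fintype S] [MeasurableSpace S] [MeasurableSingletonClass S]
    (κ : Ω → Fin K) (Wc : Ω → S) (hκ : Measurable κ) (hWc : Measurable Wc)
    (hpos : ∀ (k : Fin K) (w : S), 0 < μ {ω | κ ω = k ∧ Wc ω = w})
    (X Y : Ω → ℝ) (hX : Integrable X μ) (hY : Integrable Y μ)
    (p : Fin K → S → ℝ)
    (hp : ∀ k w, p k w = (μ {ω | κ ω = k ∧ Wc ω = w}).toReal / (μ {ω | Wc ω = w}).toReal)
    (ℓ m : Fin K → S → ℝ)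
    (hℓ : ∀ k w, ℓ k w = ∫ ω, X ω ∂(μ[|{ω | κ ω = k ∧ Wc ω = w}]))
    (hm : ∀ k w, m k w = ∫ ω, Y ω ∂(μ[|{ω | κ ω = k ∧ Wc ω = w}]))
    (ℓdd : Ω → ℝ)
    (hℓdd : ∀ ω, ℓdd ω = ℓ (κ ω) (Wc ω) - ∑ j, p j (Wc ω) * ℓ j (Wc ω))
    (hdist : ∀ (j k : Fin K) (w : S), j ≠ k → ℓ k w ≠ ℓ j w)
    (βp ωp : Fin K → Fin K → S → ℝ)
    (hβp : ∀ j k w, βp j k w = (m k w - m j w) / (ℓ k w - ℓ j w))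
    (hωp : ∀ j k w, ωp j k w = p j w * p k w * (ℓ k w - ℓ j w) ^ 2)
    (hden : ∫ ω, ℓdd ω * X ω ∂μ ≠ 0) :
    (∫ ω, ℓdd ω * Y ω ∂μ) / (∫ ω, ℓdd ω * X ω ∂μ)
      = (∑ j : Fin K, ∑ k : Fin K, if j < k then
            ∫ ω, ωp j k (Wc ω) * βp j k (Wc ω) ∂μ else 0)
        / (∑ j : Fin K, ∑ k : Fin K, if j < k then ∫ ω, ωp j k (Wc ω) ∂μ else 0) :=
  stmt12_general μ K S κ Wc hκ hWc X Y hX hY p hp ℓ m hℓ hm ℓdd hℓdd βp ωp hβp hωp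
end

section
/- The numerator of the leniency IV estimand admits the pairwise decomposition E[ℓ̈·Y] = Σ_{1≤j<k≤K} E[ p_j(W)·p_k(W)·(ℓ(k, W) − ℓ(j, W))·(μ(k, W) − μ(j, W)) ]. -/
/-!
Conditioning on the cells `{κ = k, W = w}` turns both sides into finite sums over `w`, weighted
by `P(W = w)`. For fixed `w` the left side is the `p(·, w)`-weighted covariance of `ℓ(·, w)` and
`μ(·, w)`, and the pairwise sum is that covariance because the full double sum
`∑ j, ∑ k, p j * p k * (l k - l j) * (m k - m j)` is symmetric with zero diagonal, hence twice
the sum over `j < k`, and expands to `2 * ((∑ p) * ∑ p l m - (∑ p l) * ∑ p m)`.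
-/

open MeasureTheory ProbabilityTheory

namespace Finset

variable {ι R : Type*} [Fintype ι] [LinearOrder ι]

theorem sum_sum_eq_two_mul_sum_sum_ite_lt [NonAssocSemiring R] {F : ι → ι → R}
    (hsymm : ∀ j k, F j k = F k j) (hdiag : ∀ j, F j j = 0) :
    ∑ j, ∑ k, F j k = 2 * ∑ j, ∑ k, if j < k then F j k else 0 := by
  have hsplit : ∀ j k, F j k = (if j < k then F j k else 0) + if k < j then F k j else 0 := by
    intro j k
    rcases lt_trichotomy j k with h | rfl | h
    · simp [h, h.not_gt]
    · simp [hdiag]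
    · simp [h, h.not_gt, hsymm j k]
  calc ∑ j, ∑ k, F j k
      = ∑ j, ∑ k, ((if j < k then F j k else 0) + if k < j then F k j else 0) :=
        sum_congr rfl fun j _ => sum_congr rfl fun k _ => hsplit j k
    _ = 2 * ∑ j, ∑ k, if j < k then F j k else 0 := by
        simp only [sum_add_distrib, two_mul]
        rw [sum_comm (f := fun j k => if k < j then F k j else 0)]

theorem sum_sum_ite_lt_mul_sub_mul_sub [CommRing R] [NoZeroDivisors R] [CharZero R]
    (p l m : ι → R) :
    (∑ j, ∑ k, if j < k then p j * p k * (l k - l j) * (m k - m j) else 0)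
      = (∑ k, p k) * (∑ k, p k * l k * m k) - (∑ k, p k * l k) * ∑ k, p k * m k := by
  refine mul_left_cancel₀ (two_ne_zero (α := R)) ?_
  rw [← sum_sum_eq_two_mul_sum_sum_ite_lt (fun j k => by ring) (fun j => by ring)]
  have hexpand : ∀ j k, p j * p k * (l k - l j) * (m k - m j)
      = p j * (p k * l k * m k) + p j * l j * m j * p k
        - p j * l j * (p k * m k) - p j * m j * (p k * l k) := fun j k => by ring
  simp only [hexpand, sum_add_distrib, sum_sub_distrib, ← mul_sum, ← sum_mul]
  ring

theorem sum_sub_weightedMean_mul_eq [Field R] [LinearOrder R] [IsStrictOrderedRing R]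
    (q p l m : ι → R) (hq : ∀ k, 0 ≤ q k) (hp : ∀ k, p k = q k / ∑ j, q j) :
    ∑ k, (l k - ∑ j, p j * l j) * (q k * m k)
      = (∑ k, q k) * ∑ j, ∑ k, if j < k then p j * p k * (l k - l j) * (m k - m j) else 0 := by
  rw [sum_sum_ite_lt_mul_sub_mul_sub]
  set Q := ∑ j, q j
  by_cases hQ : Q = 0
  · have hzero : ∀ k, q k = 0 := fun k =>
      (sum_eq_zero_iff_of_nonneg fun k _ => hq k).1 hQ k (mem_univ k)
    simp [hzero, hQ]
  have hqp : ∀ k, q k = Q * p k := fun k => by rw [hp, mul_div_cancel₀ _ hQ]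
  have hpsum : ∑ k, p k = 1 := by
    simp_rw [hp, ← sum_div]
    exact div_self hQ
  have hterm : ∀ k, (l k - ∑ j, p j * l j) * (Q * p k * m k)
      = Q * (p k * l k * m k) - Q * (∑ j, p j * l j) * (p k * m k) := fun k => by ring
  simp_rw [hqp, hterm, sum_sub_distrib, ← mul_sum, hpsum]
  ring

end Finset

section Integral

variable {Ω α E : Type*} [MeasurableSpace Ω] {μ : Measure Ω}
  [NormedAddCommGroup E] [NormedSpace ℝ E]

theorem setIntegral_eq_measureReal_smul_integral_cond [IsFiniteMeasure μ] (s : Set Ω)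
    (f : Ω → E) : ∫ ω in s, f ω ∂μ = μ.real s • ∫ ω, f ω ∂μ[|s] := by
  rw [ProbabilityTheory.cond, integral_smul_measure, ENNReal.toReal_inv, ← measureReal_def,
    smul_smul]
  by_cases hs : μ.real s = 0
  · rw [Measure.restrict_eq_zero.2 ((measureReal_eq_zero_iff).1 hs), integral_zero_measure,
      smul_zero]
  · rw [mul_inv_cancel₀ hs, one_smul]

variable [Fintype α] [MeasurableSpace α] [MeasurableSingletonClass α] {Z : Ω → α}

theorem integral_eq_sum_setIntegral_preimage_singleton (hZ : Measurable Z) {f : Ω → E}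
    (hf : ∀ a, IntegrableOn f (Z ⁻¹' {a}) μ) :
    ∫ ω, f ω ∂μ = ∑ a, ∫ ω in Z ⁻¹' {a}, f ω ∂μ := by
  have hcover : ⋃ a, Z ⁻¹' {a} = Set.univ := by
    rw [← Set.preimage_iUnion, Set.iUnion_of_singleton, Set.preimage_univ]
  rw [← setIntegral_univ, ← hcover]
  exact integral_iUnion_fintype (fun a => hZ (measurableSet_singleton a))
    (fun a b hab => (Set.disjoint_singleton.2 hab).preimage Z) hf

theorem integral_comp_eq_sum_measureReal_smul [CompleteSpace E] [IsFiniteMeasure μ]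
    (hZ : Measurable Z) (h : α → E) : ∫ ω, h (Z ω) ∂μ = ∑ a, μ.real (Z ⁻¹' {a}) • h a := by
  have hfiber : ∀ a, Set.EqOn (fun ω => h (Z ω)) (fun _ => h a) (Z ⁻¹' {a}) :=
    fun a ω (hω : Z ω = a) => congrArg h hω
  rw [integral_eq_sum_setIntegral_preimage_singleton hZ fun a =>
    (integrableOn_const (C := h a)).congr_fun (hfiber a).symm (hZ (measurableSet_singleton a))]
  exact Finset.sum_congr rfl fun a _ => by
    rw [setIntegral_congr_fun (hZ (measurableSet_singleton a)) (hfiber a), setIntegral_const]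

theorem integral_comp_smul_eq_sum_smul_integral_cond [IsFiniteMeasure μ] (hZ : Measurable Z)
    (g : α → ℝ) {Y : Ω → E} (hY : Integrable Y μ) :
    ∫ ω, g (Z ω) • Y ω ∂μ = ∑ a, g a • μ.real (Z ⁻¹' {a}) • ∫ ω, Y ω ∂μ[|Z ⁻¹' {a}] := by
  have hfiber : ∀ a, Set.EqOn (fun ω => g (Z ω) • Y ω) (fun ω => g a • Y ω) (Z ⁻¹' {a}) :=
    fun a ω (hω : Z ω = a) => by simp only [hω]
  rw [integral_eq_sum_setIntegral_preimage_singleton hZ fun a =>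
    IntegrableOn.congr_fun (hY.integrableOn.smul (g a)) (hfiber a).symm
      (hZ (measurableSet_singleton a))]
  exact Finset.sum_congr rfl fun a _ => by
    rw [setIntegral_congr_fun (hZ (measurableSet_singleton a)) (hfiber a), integral_smul,
      setIntegral_eq_measureReal_smul_integral_cond]

theorem measureReal_eq_sum_measureReal_preimage_singleton_inter [IsFiniteMeasure μ]
    (hZ : Measurable Z) (s : Set Ω) : μ.real s = ∑ a, μ.real (Z ⁻¹' {a} ∩ s) := by
  rw [← measureReal_restrict_apply_univ, ← Set.preimage_univ (f := Z), ← Finset.coe_univ,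
    ← sum_measureReal_preimage_singleton _ fun a _ => hZ (measurableSet_singleton a)]
  exact Finset.sum_congr rfl fun a _ => measureReal_restrict_apply (hZ (measurableSet_singleton a))

end Integral

theorem stmt13_general
    {Ω : Type*} [MeasurableSpace Ω] (μ : Measure Ω) [IsProbabilityMeasure μ]
    (K : ℕ)
    (S : Type*) [Fintype S] [MeasurableSpace S] [MeasurableSingletonClass S]
    (κ : Ω → Fin K) (Wc : Ω → S) (hκ : Measurable κ) (hWc : Measurable Wc)
    (Y : Ω → ℝ) (hY : Integrable Y μ)
    (p : Fin K → S → ℝ)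
    (hp : ∀ k w, p k w = (μ {ω | κ ω = k ∧ Wc ω = w}).toReal / (μ {ω | Wc ω = w}).toReal)
    (ℓ m : Fin K → S → ℝ)
    (hm : ∀ k w, m k w = ∫ ω, Y ω ∂(μ[|{ω | κ ω = k ∧ Wc ω = w}]))
    (ℓdd : Ω → ℝ)
    (hℓdd : ∀ ω, ℓdd ω = ℓ (κ ω) (Wc ω) - ∑ j, p j (Wc ω) * ℓ j (Wc ω)) :
    ∫ ω, ℓdd ω * Y ω ∂μ
      = ∑ j : Fin K, ∑ k : Fin K, if j < k then
          ∫ ω, p j (Wc ω) * p k (Wc ω) * (ℓ k (Wc ω) - ℓ j (Wc ω))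
            * (m k (Wc ω) - m j (Wc ω)) ∂μ else 0 := by
  set q : Fin K → S → ℝ := fun k w => μ.real {ω | κ ω = k ∧ Wc ω = w}
  have hcell : ∀ k w, (fun ω => (κ ω, Wc ω)) ⁻¹' {(k, w)} = {ω | κ ω = k ∧ Wc ω = w} :=
    fun k w => by ext; simp
  have hQ : ∀ w, μ.real (Wc ⁻¹' {w}) = ∑ k, q k w := fun w =>
    measureReal_eq_sum_measureReal_preimage_singleton_inter hκ _
  have hLHS := integral_comp_smul_eq_sum_smul_integral_cond (μ := μ) (hκ.prodMk hWc)
    (fun kw => ℓ kw.1 kw.2 - ∑ j, p j kw.2 * ℓ j kw.2) hY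
  simp only [smul_eq_mul, ← hℓdd, hcell, ← hm, Fintype.sum_prod_type] at hLHS
  have hRHS : ∀ j k : Fin K, (if j < k then
        ∫ ω, p j (Wc ω) * p k (Wc ω) * (ℓ k (Wc ω) - ℓ j (Wc ω)) * (m k (Wc ω) - m j (Wc ω)) ∂μ
        else 0)
      = ∑ w, (∑ i, q i w) * if j < k then p j w * p k w * (ℓ k w - ℓ j w) * (m k w - m j w)
        else 0 := by
    intro j k
    split_ifs
    · simp_rw [← hQ, ← smul_eq_mul]
      exact integral_comp_eq_sum_measureReal_smul (μ := μ) hWc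
        fun w => p j w * p k w * (ℓ k w - ℓ j w) * (m k w - m j w)
    · simp
  calc ∫ ω, ℓdd ω * Y ω ∂μ
      = ∑ w, (∑ i, q i w) * ∑ j, ∑ k,
          if j < k then p j w * p k w * (ℓ k w - ℓ j w) * (m k w - m j w) else 0 := by
        rw [hLHS, Finset.sum_comm]
        refine Finset.sum_congr rfl fun w _ => ?_
        rw [← Finset.sum_sub_weightedMean_mul_eq _ _ _ _ (fun k => measureReal_nonneg)
          fun k => by rw [hp, ← hQ]; rfl]
    _ = _ := by
        simp_rw [hRHS, Finset.mul_sum]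
        rw [Finset.sum_comm]
        exact Finset.sum_congr rfl fun j _ => Finset.sum_comm

/-- The numerator of the leniency IV estimand admits the pairwise
decomposition
`E[ℓ̈·Y] = Σ_{j<k} E[p_j(W)·p_k(W)·(ℓ(k,W) − ℓ(j,W))·(μ(k,W) − μ(j,W))]`. -/
theorem stmt13
    {Ω : Type*} [MeasurableSpace Ω] (μ : Measure Ω) [IsProbabilityMeasure μ]
    (K : ℕ) (hK : 2 ≤ K)
    (S : Type*) [Fintype S] [MeasurableSpace S] [MeasurableSingletonClass S]
    (κ : Ω → Fin K) (Wc : Ω → S) (hκ : Measurable κ) (hWc : Measurable Wc)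
    (hpos : ∀ (k : Fin K) (w : S), 0 < μ {ω | κ ω = k ∧ Wc ω = w})
    (X Y : Ω → ℝ) (hX : Integrable X μ) (hY : Integrable Y μ)
    (p : Fin K → S → ℝ)
    (hp : ∀ k w, p k w = (μ {ω | κ ω = k ∧ Wc ω = w}).toReal / (μ {ω | Wc ω = w}).toReal)
    (ℓ m : Fin K → S → ℝ)
    (hℓ : ∀ k w, ℓ k w = ∫ ω, X ω ∂(μ[|{ω | κ ω = k ∧ Wc ω = w}]))
    (hm : ∀ k w, m k w = ∫ ω, Y ω ∂(μ[|{ω | κ ω = k ∧ Wc ω = w}]))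
    (ℓdd : Ω → ℝ)
    (hℓdd : ∀ ω, ℓdd ω = ℓ (κ ω) (Wc ω) - ∑ j, p j (Wc ω) * ℓ j (Wc ω)) :
    ∫ ω, ℓdd ω * Y ω ∂μ
      = ∑ j : Fin K, ∑ k : Fin K, if j < k then
          ∫ ω, p j (Wc ω) * p k (Wc ω) * (ℓ k (Wc ω) - ℓ j (Wc ω))
            * (m k (Wc ω) - m j (Wc ω)) ∂μ else 0 :=
  stmt13_general μ K S κ Wc hκ hWc Y hY p hp ℓ m hm ℓdd hℓdd
end

section
/- Suppose κ is conditionally independent of (x(1),…,x(K), β̃, Y₀) given W, i.e. for every k, every w ∈ S, and every bounded measurable function f of (x(1),…,x(K), β̃, Y₀), E[f·1{κ = k, W = w}] = p_k(w)·E[f·1{W = w}]. Define the observed treatment X = x(κ) and outcome Y = Y₀ + β̃·X, and define the individual weight λ(ω) = Σ_{1≤j<k≤K} p_j(W(ω))·p_k(W(ω))·(ℓ(k, W(ω)) − ℓ(j, W(ω)))·(x(k)(ω) − x(j)(ω)). Then E[ℓ̈·Y] = E[λ·β̃] and E[ℓ̈·X] = E[λ]; hence, if E[λ] ≠ 0,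 the leniency IV estimand satisfies β* = E[ℓ̈·Y]/E[ℓ̈·X] = E[λ·β̃]/E[λ]. -/
/-!
On the cell `{κ = k, W = w}` the relative leniency `ℓ̈` is the constant
`c k w = ℓ k w - ∑ j, p j w * ℓ j w` and `X = x k`. Conditional independence moves each cell
integral of `g (x k, β̃, Y₀)` to `p k w` times the integral over the fiber `{W = w}`, so both
`E[ℓ̈ · Y]` and `E[ℓ̈ · X]` become `E[∑ k, p k W * c k W * g (x k, β̃, Y₀)]`. For weights
summing to one, `∑ k, p k * c k * y k` is the pairwise sum defining `λ`, and `∑ k, p k * c k = 0`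
removes the `Y₀` term.

Conditional independence extends from bounded test functions to integrable ones because it
identifies the law of `g (V)` on a cell with `p k w` times its law on the fiber. The potential
treatments need not be measurable: integrability of `ℓ̈ · X` makes `x k` a.e.-measurable on the
cells with `c k w ≠ 0`, and conditional independence propagates this to the whole fiber.
-/

open MeasureTheory ProbabilityTheory BigOperators

theorem sum_sum_ite_lt_mul_sub_mul_sub {ι : Type*} [Fintype ι] [LinearOrder ι]
    (a l y : ι → ℝ) (ha : ∑ i, a i = 1) :
    (∑ j, ∑ k, if j < k then a j * a k * (l k - l j) * (y k - y j) else 0)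
      = ∑ k, a k * (l k - ∑ j, a j * l j) * y k := by
  set T : ι → ι → ℝ := fun j k => a j * a k * (l k - l j) * (y k - y j)
  have hsplit : ∀ j k, T j k = (if j < k then T j k else 0) + (if k < j then T k j else 0) := by
    intro j k
    rcases lt_trichotomy j k with h | rfl | h
    · simp [h, h.not_gt]
    · simp [T]
    · simp only [h, h.not_gt, if_false, if_true, zero_add, T]; ring
  have hsymm : ∑ j, ∑ k, T j k = 2 * ∑ j, ∑ k, if j < k then T j k else 0 := by
    rw [Finset.sum_congr rfl fun j _ => Finset.sum_congr rfl fun k _ => hsplit j k]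
    simp only [Finset.sum_add_distrib]
    rw [Finset.sum_comm (f := fun j k => if k < j then T k j else 0)]
    ring
  have hexpand : ∑ j, ∑ k, T j k
      = 2 * ((∑ i, a i) * ∑ i, a i * l i * y i - (∑ i, a i * l i) * ∑ i, a i * y i) := by
    have : ∀ j k, T j k = a j * (a k * l k * y k) + a j * l j * y j * a k
        - a j * y j * (a k * l k) - a j * l j * (a k * y k) := fun j k => by ring
    simp only [this, Finset.sum_add_distrib, Finset.sum_sub_distrib, ← Finset.sum_mul_sum]
    ring
  have hrhs : ∑ k, a k * (l k - ∑ j, a j * l j) * y k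
      = ∑ i, a i * l i * y i - (∑ i, a i * l i) * ∑ i, a i * y i := by
    have : ∀ k, a k * (l k - ∑ j, a j * l j) * y k
        = a k * l k * y k - (∑ j, a j * l j) * (a k * y k) := fun k => by ring
    simp only [this, Finset.sum_sub_distrib, ← Finset.mul_sum]
  rw [ha, one_mul] at hexpand
  rw [hrhs]
  linarith

section Decomposition

variable {Ω ι S E : Type*} [MeasurableSpace Ω] {μ : Measure Ω} [NormedAddCommGroup E]
  {f : Ω → E}

theorem integral_eq_sum_setIntegral_fiber [NormedSpace ℝ E] [Fintype S] [MeasurableSpace S]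
    [MeasurableSingletonClass S] {W : Ω → S} (hW : Measurable W)
    (hf : ∀ w, IntegrableOn f {ω | W ω = w} μ) :
    ∫ ω, f ω ∂μ = ∑ w, ∫ ω in {ω | W ω = w}, f ω ∂μ := by
  change _ = ∑ w, ∫ ω in W ⁻¹' {w}, f ω ∂μ
  rw [← integral_iUnion_fintype (fun w => hW (measurableSet_singleton w))
    (pairwise_disjoint_fiber W) hf, ← Set.preimage_iUnion, Set.iUnion_of_singleton,
    Set.preimage_univ, setIntegral_univ]

variable [Fintype ι] {κ : Ω → ι} {W : Ω → S}

theorem integrableOn_fiber_of_cell {w : S}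
    (hf : ∀ k, IntegrableOn f {ω | κ ω = k ∧ W ω = w} μ) : IntegrableOn f {ω | W ω = w} μ := by
  have hcover : {ω | W ω = w} = ⋃ k, {ω | κ ω = k ∧ W ω = w} := by
    ext ω; simp
  rw [hcover]
  exact integrableOn_finite_iUnion.mpr hf

theorem setIntegral_fiber_eq_sum_setIntegral_cell [NormedSpace ℝ E] [MeasurableSpace ι]
    [MeasurableSingletonClass ι] (hκ : Measurable κ) {w : S}
    (hf : ∀ k, IntegrableOn f {ω | κ ω = k ∧ W ω = w} μ) :
    ∫ ω in {ω | W ω = w}, f ω ∂μ = ∑ k, ∫ ω in {ω | κ ω = k ∧ W ω = w}, f ω ∂μ := by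
  have hcell : ∀ k, (μ.restrict {ω | W ω = w}).restrict {ω | κ ω = k}
      = μ.restrict {ω | κ ω = k ∧ W ω = w} := fun k =>
    Measure.restrict_restrict (hκ (measurableSet_singleton k))
  rw [integral_eq_sum_setIntegral_fiber hκ fun k => ?_]
  · simp only [hcell]
  · rw [IntegrableOn, hcell]
    exact hf k

end Decomposition

theorem integrable_of_integral_eq_mul {Ω : Type*} [MeasurableSpace Ω] {ν₁ ν₂ : Measure Ω}
    [IsFiniteMeasure ν₁] [IsFiniteMeasure ν₂] (hν₁ : ν₁ ≠ 0) {f : Ω → ℝ} {c : ℝ}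
    (hf : Integrable f ν₁) (h : ∫ ω, f ω ∂ν₁ = c * ∫ ω, f ω ∂ν₂)
    (h' : ∫ ω, f ω + 1 ∂ν₁ = c * ∫ ω, f ω + 1 ∂ν₂) : Integrable f ν₂ := by
  -- otherwise both `∫ f ∂ν₂` and `∫ (f + 1) ∂ν₂` are junk zeros, forcing `ν₁ univ = 0`
  by_contra hf₂
  have hf₂' : ¬ Integrable (fun ω => f ω + 1) ν₂ := fun hf₂' =>
    hf₂ (integrable_add_const_iff.mp hf₂')
  rw [integral_undef hf₂', mul_zero, integral_add hf (integrable_const 1), h, integral_undef hf₂,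
    mul_zero, zero_add, integral_const, smul_eq_mul, mul_one] at h'
  have : NeZero ν₁ := ⟨hν₁⟩
  exact measureReal_univ_ne_zero h'

theorem map_eq_smul_map_of_integral_indicator_eq {Ω E : Type*} [MeasurableSpace Ω]
    [MeasurableSpace E] {ν₁ ν₂ : Measure Ω} [IsFiniteMeasure ν₁] [IsFiniteMeasure ν₂]
    {V : Ω → E} (hV₁ : AEMeasurable V ν₁) (hV₂ : AEMeasurable V ν₂) {c : ℝ} (hc : 0 ≤ c)
    (h : ∀ s, MeasurableSet s →
      ∫ ω, s.indicator 1 (V ω) ∂ν₁ = c * ∫ ω, s.indicator (1 : E → ℝ) (V ω) ∂ν₂) :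
    ν₁.map V = ENNReal.ofReal c • ν₂.map V := by
  ext s hs
  have hind : ∀ ν : Measure Ω, AEMeasurable V ν →
      ∫ ω, s.indicator (1 : E → ℝ) (V ω) ∂ν = (ν.map V).real s := fun ν hV => by
    rw [← integral_map hV ((measurable_one.indicator hs).aestronglyMeasurable),
      integral_indicator_one hs]
  have hs' := h s hs
  rw [hind ν₁ hV₁, hind ν₂ hV₂] at hs'
  rw [Measure.smul_apply, smul_eq_mul, ← ofReal_measureReal, ← ofReal_measureReal, hs',
    ENNReal.ofReal_mul hc]

/-- `p k w` plays the role of `P(κ = k | W = w)`: the case `f = 1` reads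
`μ {κ = k, W = w} = p k w * μ {W = w}`. -/
def CondIndepGiven {Ω ι S E : Type*} [MeasurableSpace Ω] [MeasurableSpace E] (μ : Measure Ω)
    (κ : Ω → ι) (W : Ω → S) (V : Ω → E) (p : ι → S → ℝ) : Prop :=
  ∀ k w (f : E → ℝ), Measurable f → (∃ C, ∀ v, |f v| ≤ C) →
    ∫ ω in {ω | κ ω = k ∧ W ω = w}, f (V ω) ∂μ = p k w * ∫ ω in {ω | W ω = w}, f (V ω) ∂μ

namespace CondIndepGiven

variable {Ω ι S E : Type*} [MeasurableSpace Ω] [MeasurableSpace E] {μ : Measure Ω}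
  {κ : Ω → ι} {W : Ω → S} {V : Ω → E} {p : ι → S → ℝ}

theorem measureReal_cell (h : CondIndepGiven μ κ W V p) (k : ι) (w : S) :
    μ.real {ω | κ ω = k ∧ W ω = w} = p k w * μ.real {ω | W ω = w} := by
  simpa using h k w (fun _ => 1) measurable_const ⟨1, fun _ => by simp⟩

theorem pos [IsFiniteMeasure μ] (h : CondIndepGiven μ κ W V p) {k : ι} {w : S}
    (hA : μ {ω | κ ω = k ∧ W ω = w} ≠ 0) : 0 < p k w := by
  have hA' : 0 < μ.real {ω | κ ω = k ∧ W ω = w} := ENNReal.toReal_pos hA (measure_ne_top _ _)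
  rw [h.measureReal_cell] at hA'
  exact pos_of_mul_pos_left hA' measureReal_nonneg

theorem sum_eq_one [Fintype ι] [MeasurableSpace ι] [MeasurableSingletonClass ι]
    [IsFiniteMeasure μ] (h : CondIndepGiven μ κ W V p) (hκ : Measurable κ) {w : S}
    (hB : μ {ω | W ω = w} ≠ 0) : ∑ k, p k w = 1 := by
  have hsum := setIntegral_fiber_eq_sum_setIntegral_cell (μ := μ) (f := fun _ => (1 : ℝ))
    (W := W) (w := w) hκ fun _ => integrableOn_const
  simp only [integral_const, smul_eq_mul, mul_one, measureReal_restrict_apply_univ,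
    h.measureReal_cell, ← Finset.sum_mul] at hsum
  exact (mul_eq_right₀ (ENNReal.toReal_pos hB (measure_ne_top _ _)).ne').mp hsum.symm

theorem aestronglyMeasurable_restrict_fiber [IsFiniteMeasure μ] (h : CondIndepGiven μ κ W V p)
    {k : ι} {w : S} (hA : μ {ω | κ ω = k ∧ W ω = w} ≠ 0) {G : E → ℝ} (hG : Measurable G)
    {C : ℝ} (hGV : ∀ ω, |G (V ω)| ≤ C)
    (hGA : AEStronglyMeasurable (fun ω => G (V ω)) (μ.restrict {ω | κ ω = k ∧ W ω = w})) :
    AEStronglyMeasurable (fun ω => G (V ω)) (μ.restrict {ω | W ω = w}) := by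
  -- test functions must be bounded on all of `E`, not only on the range of `V`
  set G' : E → ℝ := fun v => max (-C) (min C (G v))
  have hG'V : ∀ ω, G' (V ω) = G (V ω) := fun ω => by
    simp only [G', min_eq_right (abs_le.mp (hGV ω)).2, max_eq_right (abs_le.mp (hGV ω)).1]
  have hG'b : ∀ v, |G' v| ≤ |C| := fun v => abs_le.mpr
    ⟨(neg_le_neg (le_abs_self C)).trans (le_max_left _ _),
      max_le (neg_le_abs C) ((min_le_left _ _).trans (le_abs_self C))⟩
  have hG'm : Measurable G' := by fun_prop
  have hG'A := hGA.congr (ae_of_all _ fun ω => (hG'V ω).symm)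
  have hG'1 : ∀ v, |G' v + 1| ≤ |C| + 1 := fun v =>
    (abs_add_le _ _).trans (by rw [abs_one]; exact add_le_add_left (hG'b v) 1)
  refine (integrable_of_integral_eq_mul (Measure.restrict_eq_zero.not.mpr hA)
    (Integrable.of_bound hG'A |C| (ae_of_all _ fun ω => hG'b _)) (h k w G' hG'm ⟨_, hG'b⟩)
    (h k w (G' · + 1) (hG'm.add_const 1) ⟨_, hG'1⟩)).aestronglyMeasurable.congr
    (ae_of_all _ hG'V)

theorem aestronglyMeasurable_restrict_fiber_of_integrable_mul [IsFiniteMeasure μ]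
    [MeasurableSpace ι] [MeasurableSingletonClass ι] [MeasurableSpace S]
    [MeasurableSingletonClass S] (h : CondIndepGiven μ κ W V p) (hκ : Measurable κ)
    (hW : Measurable W) {k : ι} {w : S} (hA : μ {ω | κ ω = k ∧ W ω = w} ≠ 0) {c : ι → S → ℝ}
    (hc : c k w ≠ 0) {G : ι → E → ℝ} (hG : Measurable (G k)) {C : ℝ}
    (hGV : ∀ ω, |G k (V ω)| ≤ C) (hint : Integrable (fun ω => c (κ ω) (W ω) * G (κ ω) (V ω)) μ) :
    AEStronglyMeasurable (fun ω => G k (V ω)) (μ.restrict {ω | W ω = w}) := by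
  refine h.aestronglyMeasurable_restrict_fiber hA hG hGV
    ((hint.restrict.aestronglyMeasurable.const_mul (c k w)⁻¹).congr
      (ae_restrict_of_forall_mem ((hκ (measurableSet_singleton k)).inter
        (hW (measurableSet_singleton w))) ?_))
  rintro ω ⟨rfl, rfl⟩
  exact inv_mul_cancel_left₀ hc _

theorem setIntegral_cell_eq_mul [IsFiniteMeasure μ] (h : CondIndepGiven μ κ W V p) {k : ι} {w : S}
    (hp : 0 ≤ p k w) {G : E → ℝ} (hG : Measurable G)
    (hGV : AEMeasurable (fun ω => G (V ω)) (μ.restrict {ω | W ω = w})) :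
    ∫ ω in {ω | κ ω = k ∧ W ω = w}, G (V ω) ∂μ = p k w * ∫ ω in {ω | W ω = w}, G (V ω) ∂μ := by
  have hGV₁ : AEMeasurable (fun ω => G (V ω)) (μ.restrict {ω | κ ω = k ∧ W ω = w}) :=
    hGV.mono_measure (Measure.restrict_mono (fun _ hω => hω.2) le_rfl)
  have hind : ∀ s : Set ℝ, ∀ x, |s.indicator (1 : ℝ → ℝ) x| ≤ 1 := fun s x => by
    by_cases hx : x ∈ s <;> simp [hx]
  have hmap := map_eq_smul_map_of_integral_indicator_eq hGV₁ hGV hp fun s hs =>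
    h k w _ ((measurable_one.indicator hs).comp hG) ⟨1, fun v => hind s (G v)⟩
  have hpush : ∀ ν : Measure Ω, AEMeasurable (fun ω => G (V ω)) ν →
      ∫ ω, G (V ω) ∂ν = ∫ t, t ∂(ν.map fun ω => G (V ω)) := fun ν hν =>
    (integral_map hν aestronglyMeasurable_id).symm
  rw [hpush _ hGV₁, hpush _ hGV, hmap, integral_smul_measure, ENNReal.toReal_ofReal hp,
    smul_eq_mul]

theorem integral_mul_eq_integral_sum [Fintype ι] [MeasurableSpace ι] [MeasurableSingletonClass ι]
    [Fintype S] [MeasurableSpace S] [MeasurableSingletonClass S] [IsFiniteMeasure μ]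
    (h : CondIndepGiven μ κ W V p) (hκ : Measurable κ) (hW : Measurable W)
    (hp : ∀ k w, 0 ≤ p k w) (c : ι → S → ℝ) {G : ι → E → ℝ} (hG : ∀ k, Measurable (G k))
    (hGi : ∀ k w, c k w ≠ 0 → IntegrableOn (fun ω => G k (V ω)) {ω | W ω = w} μ) :
    ∫ ω, c (κ ω) (W ω) * G (κ ω) (V ω) ∂μ = ∫ ω, ∑ k, p k (W ω) * c k (W ω) * G k (V ω) ∂μ := by
  have hA : ∀ k w, MeasurableSet {ω | κ ω = k ∧ W ω = w} := fun k w =>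
    (hκ (measurableSet_singleton k)).inter (hW (measurableSet_singleton w))
  have hB : ∀ w, MeasurableSet {ω | W ω = w} := fun w => hW (measurableSet_singleton w)
  have hcell : ∀ k w, Set.EqOn (fun ω => c (κ ω) (W ω) * G (κ ω) (V ω))
      (fun ω => c k w * G k (V ω)) {ω | κ ω = k ∧ W ω = w} := by
    rintro k w ω ⟨rfl, rfl⟩
    rfl
  have hfiber : ∀ w, Set.EqOn (fun ω => ∑ k, p k (W ω) * c k (W ω) * G k (V ω))
      (fun ω => ∑ k, p k w * c k w * G k (V ω)) {ω | W ω = w} := by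
    rintro w ω rfl
    rfl
  have hterm : ∀ k w (a : ℝ), IntegrableOn (fun ω => a * c k w * G k (V ω)) {ω | W ω = w} μ := by
    intro k w a
    by_cases hc : c k w = 0
    · simp [hc]
    · exact (hGi k w hc).const_mul (a * c k w)
  have hL : ∀ k w, IntegrableOn (fun ω => c (κ ω) (W ω) * G (κ ω) (V ω))
      {ω | κ ω = k ∧ W ω = w} μ := fun k w =>
    (by simpa using (hterm k w 1).mono_set fun _ hω => hω.2 :
      IntegrableOn (fun ω => c k w * G k (V ω)) _ μ).congr_fun (hcell k w).symm (hA k w)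
  have hR : ∀ w, IntegrableOn (fun ω => ∑ k, p k (W ω) * c k (W ω) * G k (V ω))
      {ω | W ω = w} μ := fun w =>
    IntegrableOn.congr_fun (integrable_finsetSum _ fun k _ => hterm k w (p k w))
      (hfiber w).symm (hB w)
  rw [integral_eq_sum_setIntegral_fiber hW fun w => integrableOn_fiber_of_cell (hL · w),
    integral_eq_sum_setIntegral_fiber hW hR]
  refine Finset.sum_congr rfl fun w _ => ?_
  rw [setIntegral_fiber_eq_sum_setIntegral_cell hκ (hL · w), setIntegral_congr_fun (hB w) (hfiber w),
    integral_finsetSum _ fun k _ => hterm k w (p k w)]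
  refine Finset.sum_congr rfl fun k _ => ?_
  rw [setIntegral_congr_fun (hA k w) (hcell k w), integral_const_mul, integral_const_mul]
  by_cases hc : c k w = 0
  · simp [hc]
  · rw [h.setIntegral_cell_eq_mul (hp k w) (hG k) (hGi k w hc).aemeasurable]
    ring

end CondIndepGiven

theorem stmt15_general
    {Ω : Type*} [MeasurableSpace Ω] (μ : Measure Ω) [IsProbabilityMeasure μ]
    (K : ℕ)
    (S : Type*) [Fintype S] [MeasurableSpace S] [MeasurableSingletonClass S]
    (κ : Ω → Fin K) (Wc : Ω → S) (hκ : Measurable κ) (hWc : Measurable Wc)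
    (hpos : ∀ (k : Fin K) (w : S), 0 < μ {ω | κ ω = k ∧ Wc ω = w})
    (x : Fin K → Ω → ℝ) (hx01 : ∀ k ω, x k ω = 0 ∨ x k ω = 1)
    (βt Y₀ : Ω → ℝ) (hβt : Integrable βt μ) (hY₀ : Integrable Y₀ μ)
    (p : Fin K → S → ℝ)
    (X Y : Ω → ℝ)
    (hX : ∀ ω, X ω = x (κ ω) ω)
    (hY : ∀ ω, Y ω = Y₀ ω + βt ω * X ω)
    (ℓ : Fin K → S → ℝ)
    (ℓdd : Ω → ℝ)
    (hℓdd : ∀ ω, ℓdd ω = ℓ (κ ω) (Wc ω) - ∑ j, p j (Wc ω) * ℓ j (Wc ω))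
    -- conditional independence of `κ` and `(x(1),…,x(K), β̃, Y₀)` given `W`:
    (hci : ∀ (k : Fin K) (w : S) (f : (Fin K → ℝ) × ℝ × ℝ → ℝ),
      Measurable f → (∃ C, ∀ v, |f v| ≤ C) →
      ∫ ω in {ω | κ ω = k ∧ Wc ω = w}, f (fun j => x j ω, βt ω, Y₀ ω) ∂μ
        = p k w * ∫ ω in {ω | Wc ω = w}, f (fun j => x j ω, βt ω, Y₀ ω) ∂μ)
    (lam : Ω → ℝ)
    (hlam : ∀ ω, lam ω = ∑ j : Fin K, ∑ k : Fin K, if j < k then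
      p j (Wc ω) * p k (Wc ω) * (ℓ k (Wc ω) - ℓ j (Wc ω)) * (x k ω - x j ω) else 0)
    -- all products appearing below are integrable:
    (hint2 : Integrable (fun ω => ℓdd ω * X ω) μ) :
    (∫ ω, ℓdd ω * Y ω ∂μ = ∫ ω, lam ω * βt ω ∂μ) ∧
    (∫ ω, ℓdd ω * X ω ∂μ = ∫ ω, lam ω ∂μ) ∧
    (∫ ω, lam ω ∂μ ≠ 0 →
      (∫ ω, ℓdd ω * Y ω ∂μ) / (∫ ω, ℓdd ω * X ω ∂μ)
        = (∫ ω, lam ω * βt ω ∂μ) / (∫ ω, lam ω ∂μ)) := by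
  have hci : CondIndepGiven μ κ Wc (fun ω => (fun j => x j ω, βt ω, Y₀ ω)) p := hci
  set c : Fin K → S → ℝ := fun k w => ℓ k w - ∑ j, p j w * ℓ j w with hc
  have hp : ∀ k w, 0 ≤ p k w := fun k w => (hci.pos (hpos k w).ne').le
  have hpsum : ∀ ω, ∑ k, p k (Wc ω) = 1 := fun ω => hci.sum_eq_one hκ
    ((hpos (κ ω) (Wc ω)).trans_le (measure_mono fun _ hω => hω.2)).ne'
  have hpc : ∀ ω, ∑ k, p k (Wc ω) * c k (Wc ω) = 0 := fun ω => by
    simp only [hc, mul_sub, Finset.sum_sub_distrib, ← Finset.sum_mul, hpsum, one_mul, sub_self]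
  have hx_le : ∀ k ω, |x k ω| ≤ 1 := fun k ω => by rcases hx01 k ω with h | h <;> simp [h]
  have hLX : (fun ω => ℓdd ω * X ω) = fun ω => c (κ ω) (Wc ω) * x (κ ω) ω :=
    funext fun ω => by rw [hℓdd, hX]
  have hxB : ∀ k w, c k w ≠ 0 → AEStronglyMeasurable (x k) (μ.restrict {ω | Wc ω = w}) :=
    fun k w hck => hci.aestronglyMeasurable_restrict_fiber_of_integrable_mul hκ hWc
      (hpos k w).ne' hck (G := fun k v => v.1 k) (by fun_prop) (hx_le k) (hLX ▸ hint2)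
  have hlam' : ∀ ω, lam ω = ∑ k, p k (Wc ω) * c k (Wc ω) * x k ω := fun ω => by
    rw [hlam, sum_sum_ite_lt_mul_sub_mul_sub _ _ _ (hpsum ω)]
  have hℓX : ∫ ω, ℓdd ω * X ω ∂μ = ∫ ω, lam ω ∂μ := by
    have := hci.integral_mul_eq_integral_sum hκ hWc hp c (G := fun k v => v.1 k)
      (fun k => by fun_prop)
      fun k w hck => Integrable.of_bound (hxB k w hck) 1 (ae_of_all _ (hx_le k))
    rw [hLX, this]
    simp only [hlam']
  have hℓY : ∫ ω, ℓdd ω * Y ω ∂μ = ∫ ω, lam ω * βt ω ∂μ := by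
    have := hci.integral_mul_eq_integral_sum hκ hWc hp c (G := fun k v => v.2.2 + v.2.1 * v.1 k)
      (fun k => by fun_prop)
      fun k w hck => hY₀.integrableOn.add
        (hβt.integrableOn.mul_bdd (hxB k w hck) (ae_of_all _ (hx_le k)))
    convert this using 3 with ω
    · rw [hℓdd, hY, hX]
    · simp only [hlam', mul_add, Finset.sum_add_distrib, ← Finset.sum_mul, hpc, zero_mul, zero_add]
      rw [Finset.sum_mul]
      exact Finset.sum_congr rfl fun k _ => by ring
  exact ⟨hℓY, hℓX, fun _ => by rw [hℓY, hℓX]⟩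

/-- If examiner assignment `κ` is conditionally independent of the potential
treatments, treatment effect, and untreated outcome given `W`, then with `X = x(κ)`,
`Y = Y₀ + β̃·X`, and the individual weight `λ`, one has `E[ℓ̈·Y] = E[λ·β̃]` and
`E[ℓ̈·X] = E[λ]`; hence if `E[λ] ≠ 0` the leniency IV estimand equals `E[λ·β̃]/E[λ]`. -/
theorem stmt15
    {Ω : Type*} [MeasurableSpace Ω] (μ : Measure Ω) [IsProbabilityMeasure μ]
    (K : ℕ) (hK : 2 ≤ K)
    (S : Type*) [Fintype S] [MeasurableSpace S] [MeasurableSingletonClass S]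
    (κ : Ω → Fin K) (Wc : Ω → S) (hκ : Measurable κ) (hWc : Measurable Wc)
    (hpos : ∀ (k : Fin K) (w : S), 0 < μ {ω | κ ω = k ∧ Wc ω = w})
    (x : Fin K → Ω → ℝ) (hx01 : ∀ k ω, x k ω = 0 ∨ x k ω = 1)
    (βt Y₀ : Ω → ℝ) (hβt : Integrable βt μ) (hY₀ : Integrable Y₀ μ)
    (p : Fin K → S → ℝ)
    (hp : ∀ k w, p k w = (μ {ω | κ ω = k ∧ Wc ω = w}).toReal / (μ {ω | Wc ω = w}).toReal)
    (X Y : Ω → ℝ)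
    (hX : ∀ ω, X ω = x (κ ω) ω)
    (hY : ∀ ω, Y ω = Y₀ ω + βt ω * X ω)
    (ℓ : Fin K → S → ℝ)
    (hℓ : ∀ k w, ℓ k w = ∫ ω, X ω ∂(μ[|{ω | κ ω = k ∧ Wc ω = w}]))
    (ℓdd : Ω → ℝ)
    (hℓdd : ∀ ω, ℓdd ω = ℓ (κ ω) (Wc ω) - ∑ j, p j (Wc ω) * ℓ j (Wc ω))
    -- conditional independence of `κ` and `(x(1),…,x(K), β̃, Y₀)` given `W`:
    (hci : ∀ (k : Fin K) (w : S) (f : (Fin K → ℝ) × ℝ × ℝ → ℝ),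
      Measurable f → (∃ C, ∀ v, |f v| ≤ C) →
      ∫ ω in {ω | κ ω = k ∧ Wc ω = w}, f (fun j => x j ω, βt ω, Y₀ ω) ∂μ
        = p k w * ∫ ω in {ω | Wc ω = w}, f (fun j => x j ω, βt ω, Y₀ ω) ∂μ)
    (lam : Ω → ℝ)
    (hlam : ∀ ω, lam ω = ∑ j : Fin K, ∑ k : Fin K, if j < k then
      p j (Wc ω) * p k (Wc ω) * (ℓ k (Wc ω) - ℓ j (Wc ω)) * (x k ω - x j ω) else 0)
    -- all products appearing below are integrable:
    (hint1 : Integrable (fun ω => ℓdd ω * Y ω) μ)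
    (hint2 : Integrable (fun ω => ℓdd ω * X ω) μ)
    (hint3 : Integrable (fun ω => lam ω * βt ω) μ)
    (hint4 : Integrable lam μ) :
    (∫ ω, ℓdd ω * Y ω ∂μ = ∫ ω, lam ω * βt ω ∂μ) ∧
    (∫ ω, ℓdd ω * X ω ∂μ = ∫ ω, lam ω ∂μ) ∧
    (∫ ω, lam ω ∂μ ≠ 0 →
      (∫ ω, ℓdd ω * Y ω ∂μ) / (∫ ω, ℓdd ω * X ω ∂μ)
        = (∫ ω, lam ω * βt ω ∂μ) / (∫ ω, lam ω ∂μ)) :=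
  stmt15_general μ K S κ Wc hκ hWc hpos x hx01 βt Y₀ hβt hY₀ p X Y hX hY ℓ ℓdd hℓdd hci lam hlam
    hint2
end

section
/- Let λ = Σ_{1≤j<k≤K} p_j·p_k·(ℓ_k − ℓ_j)·(x_k − x_j) and q = Σ_{k=1}^{K} p_k·x_k. Then λ equals the covariance, under the distribution p on {1,…,K}, between the potential treatment x_k and the leniency ℓ_k: λ = Σ_k p_k·x_k·ℓ_k − (Σ_k p_k·x_k)·(Σ_k p_k·ℓ_k). Moreover, if 0 < q < 1, then λ ≥ 0 if and only if (Σ_k x_k·p_k·ℓ_k)/q ≥ (Σ_k (1 − x_k)·p_k·ℓ_k)/(1 − q), i.e. the individual weight is nonnegative exactly when the average leniency of the examiners who would treat the unit is at least the average leniency of those who would not (average monotonicity). -/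
open BigOperators

/-- The individual weight `λ = Σ_{j<k} p_j p_k (ℓ_k − ℓ_j)(x_k − x_j)` equals
the covariance under `p` between potential treatment and leniency; moreover, when
`0 < q < 1`, `λ ≥ 0` iff the average leniency of examiners who would treat the unit is at
least that of those who would not (average monotonicity). -/
theorem stmt17
    (K : ℕ) (hK : 2 ≤ K)
    (p ℓ x : Fin K → ℝ)
    (hp : ∀ k, 0 ≤ p k) (hpsum : ∑ k, p k = 1)
    (hx01 : ∀ k, x k = 0 ∨ x k = 1)
    (lam q : ℝ)
    (hlam : lam = ∑ j : Fin K, ∑ k : Fin K, if j < k then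
      p j * p k * (ℓ k - ℓ j) * (x k - x j) else 0)
    (hq : q = ∑ k, p k * x k) :
    lam = ∑ k, p k * x k * ℓ k - (∑ k, p k * x k) * (∑ k, p k * ℓ k) ∧
    (0 < q → q < 1 →
      (0 ≤ lam ↔
        (∑ k, (1 - x k) * p k * ℓ k) / (1 - q) ≤ (∑ k, x k * p k * ℓ k) / q)) := by
  set f : Fin K → Fin K → ℝ := fun j k => p j * p k * (ℓ k - ℓ j) * (x k - x j) with hf
  have hsymm : ∀ j k, f j k = f k j := by intro j k; simp only [hf]; ring
  -- full double sum
  have hS : ∑ j : Fin K, ∑ k : Fin K, f j k =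
      2 * (∑ k, p k * x k * ℓ k) - 2 * ((∑ k, p k * x k) * (∑ k, p k * ℓ k)) := by
    have hexp : ∀ j k : Fin K, f j k =
        p j * (p k * x k * ℓ k) + (p j * x j * ℓ j) * p k
          - (p j * x j) * (p k * ℓ k) - (p j * ℓ j) * (p k * x k) := by
      intro j k; simp only [hf]; ring
    simp_rw [hexp, Finset.sum_sub_distrib, Finset.sum_add_distrib, ← Finset.mul_sum,
      ← Finset.sum_mul, hpsum]
    ring
  have hsplit : ∀ j k : Fin K, f j k =
      (if j < k then f j k else 0) + (if k < j then f j k else 0) := by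
    intro j k
    rcases lt_trichotomy j k with h | h | h
    · simp [h, not_lt.mpr h.le]
    · subst h; simp [hf]
    · simp [h, not_lt.mpr h.le]
  have hswap : (∑ j : Fin K, ∑ k : Fin K, if k < j then f j k else 0)
      = ∑ j : Fin K, ∑ k : Fin K, if j < k then f j k else 0 := by
    rw [Finset.sum_comm]
    refine Finset.sum_congr rfl fun j _ => Finset.sum_congr rfl fun k _ => ?_
    rw [hsymm]
  have h2lam : 2 * lam = ∑ j : Fin K, ∑ k : Fin K, f j k := by
    calc 2 * lam = (∑ j : Fin K, ∑ k : Fin K, if j < k then f j k else 0)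
        + (∑ j : Fin K, ∑ k : Fin K, if k < j then f j k else 0) := by
          rw [hlam, hswap]; ring
      _ = ∑ j : Fin K, ∑ k : Fin K, f j k := by
          rw [← Finset.sum_add_distrib]
          refine Finset.sum_congr rfl fun j _ => ?_
          rw [← Finset.sum_add_distrib]
          exact Finset.sum_congr rfl fun k _ => (hsplit j k).symm
  have hcov : lam = ∑ k, p k * x k * ℓ k - (∑ k, p k * x k) * (∑ k, p k * ℓ k) := by
    have := h2lam.trans hS
    linarith
  refine ⟨hcov, fun hq0 hq1 => ?_⟩
  have hA : ∑ k, x k * p k * ℓ k = ∑ k, p k * x k * ℓ k := by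
    exact Finset.sum_congr rfl fun k _ => by ring
  have hB : ∑ k, (1 - x k) * p k * ℓ k = (∑ k, p k * ℓ k) - ∑ k, p k * x k * ℓ k := by
    rw [← Finset.sum_sub_distrib]
    exact Finset.sum_congr rfl fun k _ => by ring
  rw [hA, hB, hcov, ← hq]
  set A := ∑ k, p k * x k * ℓ k
  set L := ∑ k, p k * ℓ k
  rw [div_le_div_iff₀ (by linarith) hq0]
  constructor <;> intro h <;> nlinarith
end
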